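/- arXiv:1609.03710 — 7 statements merged into one kernel-verified Lean document; each statement's English description precedes it below -/
import Mathlib

section
/- Let J ⊆ K[x_1,…,x_m] be an ideal generated by binomials containing no binomial of the form x^u − 1 with u ≠ 0. If rad(J) = rad((F_1,…,F_s)) for some polynomials F_1,…,F_s ∈ J, then for every indispensable monomial M of J whose support is minimal (under inclusion) among the supports of indispensable monials of J, there exist an index l ∈ {1,…,s} and a monomial N occurring with nonzero coefficient in F_l such that supp(N) = supp(M). -/
open MvPolynomial

noncomputable section

/-- A binomial is a difference of two monomials `x^u − x^v`. -/
def IsBinomial {K : Type*} [Field K] {m : ℕ} (f : MvPolynomial (Fin m) K) : Prop :=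
  ∃ u v : Fin m →₀ ℕ, f = monomial u (1 : K) - monomial v 1

/-- A monomial `x^u` is an indispensable monomial of `J` if every set of binomials
generating `J` contains a binomial having `x^u` as one of its two monomials. -/
def IsIndispensableMonomial {K : Type*} [Field K] {m : ℕ}
    (J : Ideal (MvPolynomial (Fin m) K)) (u : Fin m →₀ ℕ) : Prop :=
  ∀ S : Set (MvPolynomial (Fin m) K), (∀ f ∈ S, IsBinomial f) → Ideal.span S = J →
    ∃ v : Fin m →₀ ℕ,
      (monomial u (1 : K) - monomial v 1) ∈ S ∨ (monomial v (1 : K) - monomial u 1) ∈ S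

/-!
Write `a ∼ b` when `x^a − x^b ∈ J`; this is a congruence on `ℕ^m`, and since `J` is generated by
binomials, `J` lies in the kernel of `K[x] → K[ℕ^m/∼]`. An exponent `w` that is minimal among those
related to some other exponent is indispensable: for a binomial generating set `S`, the congruence
generated by `S` is again `∼`; in a step `d + a ↦ d' + b` out of `w = d + a` with `a ≠ b`
minimality forces `d = 0`, hence `d' = 0` (no `x^e − 1` lies in `J`), so only a pair of `S`
containing `w` can move `w`. Hence, `σ = supp u` being minimal, an exponent whose support lies
strictly inside `σ` is related to nothing else.

If no `F_l` had a monomial of support `σ`, every `F_l` would already vanish in `K[ℕ^m/≈]`, where `≈`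
is generated by the relations `a ∼ b` with `supp a ≠ σ ≠ supp b`. But `≈` moves no exponent of
support inside `σ`, so the class of `n • u` is a singleton and `(x^u − x^v)^n` has coefficient `1`
there, contradicting `(x^u − x^v)^n ∈ (F_1, …, F_s)`.
-/

namespace AddCon

variable {M : Type*} [AddCommMonoid M]

theorem add_eq_of_add_eq_of_isolated {c : AddCon M} (hc₀ : ∀ b, c 0 b → b = 0) {w : M}
    (hw : ∀ d a b, w = d + a → c a b → a ≠ b → d = 0) {p p' q q' : M}
    (hp : c p p') (hq : c q q') (hp' : p = w → p' = w) (hq' : q = w → q' = w)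
    (h : p + q = w) : p' + q' = w := by
  by_cases hpp : p = p'
  · by_cases hqq : q = q'
    · rw [← hpp, ← hqq, h]
    · have hp₀ : p = 0 := hw p q q' h.symm hq hqq
      rw [hp₀, zero_add] at h
      rw [← hpp, hp₀, hq' h, zero_add]
  · have hq₀ : q = 0 := hw q p p' (by rw [← h, add_comm]) hp hpp
    rw [hq₀, add_zero] at h
    rw [hp' h, hc₀ q' (hq₀ ▸ hq), add_zero]

end AddCon

namespace AddConGen.Rel

variable {M : Type*} [AddCommMonoid M] {r : M → M → Prop}

theorem eq_iff_of_isolated {c : AddCon M} (hrc : addConGen r ≤ c)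
    (hc₀ : ∀ b, c 0 b → b = 0) {w : M} (hw : ∀ d a b, w = d + a → c a b → a ≠ b → d = 0)
    (hwr : ∀ v, ¬r w v ∧ ¬r v w) {x y : M} (h : AddConGen.Rel r x y) : x = w ↔ y = w := by
  induction h with
  | of a b hab =>
    exact ⟨fun ha => absurd (ha ▸ hab) (hwr b).1, fun hb => absurd (hb ▸ hab) (hwr a).2⟩
  | refl => exact Iff.rfl
  | symm _ ih => exact ih.symm
  | trans _ _ ih₁ ih₂ => exact ih₁.trans ih₂
  | add h₁ h₂ ih₁ ih₂ =>
    exact ⟨AddCon.add_eq_of_add_eq_of_isolated hc₀ hw (hrc h₁) (hrc h₂) ih₁.1 ih₂.1,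
      AddCon.add_eq_of_add_eq_of_isolated hc₀ hw (c.symm (hrc h₁)) (c.symm (hrc h₂)) ih₁.2 ih₂.2⟩

theorem eq_of_face {P : M → Prop} (hP : ∀ p q, P (p + q) ↔ P p ∧ P q)
    (hr : ∀ a b, r a b → (P a → a = b) ∧ (P b → a = b)) {x y : M} (h : AddConGen.Rel r x y) :
    (P x → x = y) ∧ (P y → x = y) := by
  induction h with
  | of a b hab => exact hr a b hab
  | refl => exact ⟨fun _ => rfl, fun _ => rfl⟩
  | symm _ ih => exact ⟨fun h => (ih.2 h).symm, fun h => (ih.1 h).symm⟩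
  | trans _ _ ih₁ ih₂ =>
    exact ⟨fun h => (ih₁.1 h).trans (ih₂.1 (ih₁.1 h ▸ h)),
      fun h => (ih₁.2 (ih₂.2 h ▸ h)).trans (ih₂.2 h)⟩
  | add _ _ ih₁ ih₂ =>
    exact ⟨fun h => congr_arg₂ (· + ·) (ih₁.1 ((hP _ _).1 h).1) (ih₂.1 ((hP _ _).1 h).2),
      fun h => congr_arg₂ (· + ·) (ih₁.2 ((hP _ _).1 h).1) (ih₂.2 ((hP _ _).1 h).2)⟩

end AddConGen.Rel

theorem eq_of_nsmul_eq_add_nsmul {M : Type*} [AddCommMonoid M] [IsLeftCancelAdd M]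
    [IsAddTorsionFree M] {a b : M} {i n : ℕ} (hi : i < n) (h : n • a = i • a + (n - i) • b) :
    a = b := by
  rw [← Nat.add_sub_cancel' hi.le, add_nsmul, Nat.add_sub_cancel_left] at h
  exact nsmul_right_injective (Nat.sub_ne_zero_of_lt hi) (add_left_cancel h)

namespace AddMonoidAlgebra

theorem coeff_single_sub_single_pow {R M : Type*} [CommRing R] [AddCommMonoid M] {a b : M}
    {n : ℕ} (h : ∀ i < n, i • a + (n - i) • b ≠ n • a) :
    ((single a (1 : R) - single b 1) ^ n).coeff (n • a) = 1 := by
  classical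
  have hterm : ∀ i, single a (1 : R) ^ i * (-single b 1) ^ (n - i) * (n.choose i : R[M]) =
      single (i • a + (n - i) • b) ((-1 : R) ^ (n - i) * n.choose i) := by
    intro i
    rw [← single_neg, single_pow, single_pow, single_mul_single, natCast_def, single_mul_single,
      add_zero, one_pow, one_mul]
  rw [sub_eq_add_neg, add_pow, coeff_sum, Finsupp.finsetSum_apply, Finset.sum_eq_single n]
  · simp
  · intro i hi hin
    rw [hterm, coeff_single, Finsupp.single_apply, if_neg (h i (by grind))]
  · simp

end AddMonoidAlgebra

namespace MvPolynomial

variable {R σ : Type*} [CommRing R]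

def binomialCon (J : Ideal (MvPolynomial σ R)) : AddCon (σ →₀ ℕ) where
  r a b := monomial a (1 : R) - monomial b 1 ∈ J
  iseqv :=
    { refl _ := by simp
      symm h := by simpa using J.neg_mem h
      trans h₁ h₂ := by simpa using J.add_mem h₁ h₂ }
  add' {a b c d} h₁ h₂ := by
    have := J.add_mem (J.mul_mem_left (monomial c 1) h₁) (J.mul_mem_left (monomial b 1) h₂)
    convert this using 1
    rw [mul_sub, mul_sub, monomial_mul, monomial_mul, monomial_mul, monomial_mul, one_mul,
      add_comm c a, add_comm c b, add_comm b d]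
    abel

theorem binomialCon_zero_left {J : Ideal (MvPolynomial σ R)}
    (hJ : ∀ a : σ →₀ ℕ, a ≠ 0 → monomial a (1 : R) - 1 ∉ J) {b : σ →₀ ℕ}
    (h : binomialCon J 0 b) : b = 0 := by
  by_contra hb
  exact hJ b hb (by simpa using J.neg_mem h)

variable (R) in
def mapQuotient (c : AddCon (σ →₀ ℕ)) : MvPolynomial σ R →+* AddMonoidAlgebra R c.Quotient :=
  AddMonoidAlgebra.mapDomainRingHom R c.mk'

theorem mapQuotient_monomial (c : AddCon (σ →₀ ℕ)) (a : σ →₀ ℕ) (r : R) :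
    mapQuotient R c (monomial a r) = AddMonoidAlgebra.single (c.mk' a) r :=
  AddMonoidAlgebra.mapDomain_single

theorem mapQuotient_monomial_sub_monomial_eq_zero [Nontrivial R] {c : AddCon (σ →₀ ℕ)}
    {a b : σ →₀ ℕ} : mapQuotient R c (monomial a 1 - monomial b 1) = 0 ↔ c a b := by
  rw [map_sub, mapQuotient_monomial, mapQuotient_monomial, sub_eq_zero,
    AddMonoidAlgebra.single_left_inj one_ne_zero]
  exact c.eq

theorem span_le_ker_mapQuotient {c : AddCon (σ →₀ ℕ)} {S : Set (MvPolynomial σ R)}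
    (hS : ∀ f ∈ S, ∃ a b, f = monomial a 1 - monomial b 1 ∧ c a b) :
    Ideal.span S ≤ RingHom.ker (mapQuotient R c) := by
  rw [Ideal.span_le]
  intro f hf
  obtain ⟨a, b, rfl, hab⟩ := hS f hf
  simp [mapQuotient_monomial, c.eq.2 hab]

theorem le_ker_mapQuotient_binomialCon {J : Ideal (MvPolynomial σ R)}
    {S : Set (MvPolynomial σ R)} (hS : ∀ f ∈ S, ∃ a b, f = monomial a (1 : R) - monomial b 1)
    (hJ : J = Ideal.span S) : J ≤ RingHom.ker (mapQuotient R (binomialCon J)) := by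
  subst hJ
  refine span_le_ker_mapQuotient fun f hf => ?_
  obtain ⟨a, b, rfl⟩ := hS f hf
  exact ⟨a, b, rfl, Ideal.subset_span hf⟩

theorem coeff_mapQuotient (c : AddCon (σ →₀ ℕ)) (f : MvPolynomial σ R) :
    (mapQuotient R c f).coeff = Finsupp.mapDomain c.mk' (AddMonoidAlgebra.coeff f) := rfl

-- `K[ℕ^σ/d]` is `K[ℕ^σ/c]` pushed along `ℕ^σ/c → ℕ^σ/d`, which is injective on the classes of
-- the exponents of `f`.
theorem mapQuotient_eq_zero_of_le {c d : AddCon (σ →₀ ℕ)} (hcd : c ≤ d) {f : MvPolynomial σ R}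
    (hf : ∀ a ∈ f.support, ∀ b ∈ f.support, d a b → c a b) (h : mapQuotient R d f = 0) :
    mapQuotient R c f = 0 := by
  classical
  have hinj : Set.InjOn (c.map d hcd) (c.mk' '' f.support) := by
    rintro _ ⟨a, ha, rfl⟩ _ ⟨b, hb, rfl⟩ hab
    exact c.eq.2 (hf a ha b hb (d.eq.1 hab))
  have hcomp : (mapQuotient R d f).coeff =
      Finsupp.mapDomain (c.map d hcd) (mapQuotient R c f).coeff := by
    rw [coeff_mapQuotient, coeff_mapQuotient, ← Finsupp.mapDomain_comp]
    rfl
  apply AddMonoidAlgebra.coeff_injective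
  refine Finsupp.mapDomain_injOn _ hinj (fun x hx => ?_) (by simp) ?_
  · simpa [MvPolynomial.support] using
      Finsupp.mapDomain_support (f := c.mk') (s := AddMonoidAlgebra.coeff f) hx
  · rw [← hcomp, h]; simp

section Indispensable

variable {K : Type*} [Field K] {m : ℕ} {J : Ideal (MvPolynomial (Fin m) K)}

theorem isIndispensableMonomial_of_minimal
    (hJ : ∀ a : Fin m →₀ ℕ, a ≠ 0 → monomial a (1 : K) - 1 ∉ J) {w : Fin m →₀ ℕ}
    (hw : Minimal (fun a => ∃ b ≠ a, binomialCon J a b) w) : IsIndispensableMonomial J w := by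
  intro S hS hSJ
  obtain ⟨z, hzw, hwz⟩ := hw.prop
  let r (a b : Fin m →₀ ℕ) : Prop := monomial a (1 : K) - monomial b 1 ∈ S
  have hrJ : addConGen r ≤ binomialCon J :=
    AddCon.addConGen_le.2 fun a b hab => hSJ ▸ Ideal.subset_span hab
  have hw_isolated (d a b : Fin m →₀ ℕ) (hda : w = d + a) (hab : binomialCon J a b)
      (hne : a ≠ b) : d = 0 := by
    subst hda
    exact nonpos_iff_eq_zero.1 (add_le_iff_nonpos_left.1 (hw.2 ⟨b, hne.symm, hab⟩ le_add_self))
  have hwz_gen : addConGen r w z := by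
    have hker : J ≤ RingHom.ker (mapQuotient K (addConGen r)) :=
      hSJ ▸ span_le_ker_mapQuotient fun f hf => by
        obtain ⟨a, b, rfl⟩ := hS f hf
        exact ⟨a, b, rfl, AddConGen.Rel.of _ _ hf⟩
    exact mapQuotient_monomial_sub_monomial_eq_zero.1 (hker hwz)
  by_contra! hwS
  exact hzw ((hwz_gen.eq_iff_of_isolated hrJ (fun _ => binomialCon_zero_left hJ)
    hw_isolated hwS).1 rfl)

theorem support_eq_of_binomialCon (hJ : ∀ a : Fin m →₀ ℕ, a ≠ 0 → monomial a (1 : K) - 1 ∉ J)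
    {σ : Finset (Fin m)} (hσ : ∀ w, IsIndispensableMonomial J w → w.support ⊆ σ → w.support = σ)
    {a b : Fin m →₀ ℕ} (hab : binomialCon J a b) (hne : b ≠ a) (ha : a.support ⊆ σ) :
    a.support = σ := by
  obtain ⟨a', ha'a, ha'⟩ :=
    exists_minimal_le_of_wellFoundedLT (fun a => ∃ b ≠ a, binomialCon J a b) a ⟨b, hne, hab⟩
  have hsub : a'.support ⊆ a.support := Finsupp.support_mono ha'a
  have ha'σ := hσ a' (isIndispensableMonomial_of_minimal hJ ha') (hsub.trans ha)
  exact Finset.Subset.antisymm ha (ha'σ ▸ hsub)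

theorem eq_of_addConGen_of_support_subset
    (hJ : ∀ a : Fin m →₀ ℕ, a ≠ 0 → monomial a (1 : K) - 1 ∉ J) {σ : Finset (Fin m)}
    (hσ : ∀ w, IsIndispensableMonomial J w → w.support ⊆ σ → w.support = σ) {x y : Fin m →₀ ℕ}
    (h : AddConGen.Rel (fun a b => binomialCon J a b ∧ a.support ≠ σ ∧ b.support ≠ σ) x y)
    (hx : x.support ⊆ σ) : x = y := by
  classical
  refine (h.eq_of_face (P := fun a => a.support ⊆ σ) (fun p q => ?_) (fun a b hab => ?_)).1 hx
  · rw [Finsupp.support_add_eq_union, Finset.union_subset_iff]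
  · obtain ⟨hab, ha, hb⟩ := hab
    refine ⟨fun has => ?_, fun hbs => ?_⟩
    · by_contra hne
      exact ha (support_eq_of_binomialCon hJ hσ hab (Ne.symm hne) has)
    · by_contra hne
      exact hb (support_eq_of_binomialCon hJ hσ ((binomialCon J).symm hab) hne hbs)

theorem exists_ne_binomialCon {S : Set (MvPolynomial (Fin m) K)} (hS : ∀ f ∈ S, IsBinomial f)
    (hJ : J = Ideal.span S) {u : Fin m →₀ ℕ} (hu : IsIndispensableMonomial J u) :
    ∃ v ≠ u, binomialCon J u v := by
  obtain ⟨v, hv⟩ :=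
    hu (S \ {0}) (fun f hf => hS f hf.1) (hJ ▸ Ideal.span_sdiff_singleton_zero)
  refine ⟨v, ?_, ?_⟩
  · rintro rfl
    simp at hv
  · rcases hv with hv | hv
    · exact hJ ▸ Ideal.subset_span hv.1
    · exact (binomialCon J).symm (hJ ▸ Ideal.subset_span hv.1)

end Indispensable

end MvPolynomial

open MvPolynomial in
theorem stmt_0 (K : Type*) [Field K] (m : ℕ) (J : Ideal (MvPolynomial (Fin m) K))
    -- `J` is generated by binomials
    (S₀ : Set (MvPolynomial (Fin m) K)) (hS₀ : ∀ f ∈ S₀, IsBinomial f)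
    (hJ : J = Ideal.span S₀)
    -- `J` contains no binomial `x^u − 1` with `u ≠ 0`
    (hno : ∀ u : Fin m →₀ ℕ, u ≠ 0 → (monomial u (1 : K) - 1) ∉ J)
    -- `rad(J) = rad((F_1, …, F_s))` with `F_1, …, F_s ∈ J`
    (s : ℕ) (F : Fin s → MvPolynomial (Fin m) K) (hF : ∀ i, F i ∈ J)
    (hrad : J.radical = (Ideal.span (Set.range F)).radical
      )
    -- `x^u` is an indispensable monomial of `J` with minimal support
    (u : Fin m →₀ ℕ) (hu : IsIndispensableMonomial J u)
    (humin : ∀ w : Fin m →₀ ℕ, IsIndispensableMonomial J w →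
      w.support ⊆ u.support → w.support = u.support) :
    ∃ l : Fin s, ∃ v ∈ (F l).support, v.support = u.support := by
  obtain ⟨v, hvu, huv⟩ := exists_ne_binomialCon hS₀ hJ hu
  by_contra! hFu
  let c := addConGen fun a b => binomialCon J a b ∧ a.support ≠ u.support ∧ b.support ≠ u.support
  have hker : Ideal.span (Set.range F) ≤ RingHom.ker (mapQuotient K c) := by
    refine Ideal.span_le.2 (Set.range_subset_iff.2 fun l => ?_)
    refine mapQuotient_eq_zero_of_le (AddCon.addConGen_le.2 fun _ _ h => h.1)
      (fun a ha b hb hab => ?_) (le_ker_mapQuotient_binomialCon hS₀ hJ (hF l))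
    exact AddConGen.Rel.of _ _ ⟨hab, hFu l a ha, hFu l b hb⟩
  obtain ⟨n, hn⟩ := Ideal.mem_radical_iff.1 (hrad ▸ Ideal.le_radical huv)
  have hzero := hker hn
  rw [RingHom.mem_ker, map_pow, map_sub, mapQuotient_monomial, mapQuotient_monomial] at hzero
  have hsep (i : ℕ) (hi : i < n) : i • c.mk' u + (n - i) • c.mk' v ≠ n • c.mk' u := by
    rw [← map_nsmul, ← map_nsmul, ← map_add, ← map_nsmul]
    intro heq
    refine hvu (eq_of_nsmul_eq_add_nsmul hi ?_).symm
    exact eq_of_addConGen_of_support_subset hno humin (c.eq.1 heq.symm) Finsupp.support_smul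
  have hcoeff := AddMonoidAlgebra.coeff_single_sub_single_pow (R := K) hsep
  rw [hzero, AddMonoidAlgebra.coeff_zero, Finsupp.coe_zero, Pi.zero_apply] at hcoeff
  exact zero_ne_one hcoeff
end
end

section
/- Let J ⊆ K[x_1,…,x_m] be an ideal generated by binomials containing no binomial of the form x^u − 1 with u ≠ 0. Then bar(J) ≥ δ(Δ_J)_{{0,1}}, i.e., the binomial arithmetical rank of J is at least the minimum cardinality of a maximal {0,1}-matching in the simplicial complex Δ_J. -/
open MvPolynomial

noncomputable section

/-- `T_min`: the set of minimal elements (under inclusion) among the supports of the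
indispensable monomials of `J`. -/
def Tmin {K : Type*} [Field K] {m : ℕ} (J : Ideal (MvPolynomial (Fin m) K)) :
    Set (Finset (Fin m)) :=
  {E | (∃ u : Fin m →₀ ℕ, IsIndispensableMonomial J u ∧ u.support = E) ∧
    ∀ E' : Finset (Fin m), (∃ u : Fin m →₀ ℕ, IsIndispensableMonomial J u ∧ u.support = E') →
      E' ⊆ E → E' = E}

/-- A nonempty finite set `T ⊆ T_min` is a simplex of `Δ_J` if there are monomials `M_E`,
`E ∈ T`, with `supp(M_E) = E` and `M_E − M_{E'} ∈ J` for all `E, E' ∈ T`. -/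
def IsSimplex {K : Type*} [Field K] {m : ℕ} (J : Ideal (MvPolynomial (Fin m) K))
    (T : Finset (Finset (Fin m))) : Prop :=
  T.Nonempty ∧ (∀ E ∈ T, E ∈ Tmin J) ∧
  ∃ M : Finset (Fin m) → (Fin m →₀ ℕ),
    (∀ E ∈ T, (M E).support = E) ∧
    (∀ E ∈ T, ∀ E' ∈ T, (monomial (M E) (1 : K) - monomial (M E') 1) ∈ J)

/-- A `Q`-matching in `Δ_J`: a finite set of pairwise disjoint simplices of `Δ_J` whose
dimensions (cardinality minus one) all lie in `Q`. -/
def IsQMatching {K : Type*} [Field K] {m : ℕ} (J : Ideal (MvPolynomial (Fin m) K))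
    (Q : Set ℕ) (N : Finset (Finset (Finset (Fin m)))) : Prop :=
  (∀ T ∈ N, IsSimplex J T ∧ (T.card - 1) ∈ Q) ∧
  (∀ T ∈ N, ∀ T' ∈ N, T ≠ T' → Disjoint T T')

/-- A maximal `Q`-matching: one whose support (union of its simplices) has the maximum
possible cardinality among all `Q`-matchings. -/
def IsMaximalQMatching {K : Type*} [Field K] {m : ℕ} (J : Ideal (MvPolynomial (Fin m) K))
    (Q : Set ℕ) (N : Finset (Finset (Finset (Fin m)))) : Prop :=
  IsQMatching J Q N ∧
  ∀ N' : Finset (Finset (Finset (Fin m))), IsQMatching J Q N' →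
    (N'.sup id).card ≤ (N.sup id).card

/-- `δ(Δ_J)_Q`: the minimum cardinality of a maximal `Q`-matching in `Δ_J`. -/
def deltaQ {K : Type*} [Field K] {m : ℕ} (J : Ideal (MvPolynomial (Fin m) K))
    (Q : Set ℕ) : ℕ :=
  sInf {s | ∃ N : Finset (Finset (Finset (Fin m))), IsMaximalQMatching J Q N ∧ N.card = s}

/-- The binomial arithmetical rank: the smallest `s` such that there are `s` binomials
in `I` generating `I` up to radical. -/
def bar {K : Type*} [Field K] {m : ℕ} (I : Ideal (MvPolynomial (Fin m) K)) : ℕ :=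
  sInf {s | ∃ B : Fin s → MvPolynomial (Fin m) K,
    (∀ i, IsBinomial (B i)) ∧ (∀ i, B i ∈ I) ∧
    (Ideal.span (Set.range B)).radical = I.radical}

section Aux

variable {K : Type*} [Field K] {m : ℕ}


lemma monomial_sub_eq_zero_iff {u v : Fin m →₀ ℕ} :
    monomial u (1 : K) - monomial v 1 = 0 ↔ u = v := by
  rw [sub_eq_zero]
  constructor
  · intro h
    rcases (monomial_eq_monomial_iff u v (1 : K) 1).1 h with ⟨h1, _⟩ | ⟨h1, _⟩
    · exact h1
    · exact absurd h1 one_ne_zero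
  · rintro rfl; rfl

lemma coeff_monomial_sub (u v w : Fin m →₀ ℕ) :
    coeff w (monomial u (1 : K) - monomial v 1)
      = (if u = w then (1 : K) else 0) - (if v = w then 1 else 0) := by
  classical
  rw [coeff_sub, coeff_monomial, coeff_monomial]

lemma support_monomial_sub {u v : Fin m →₀ ℕ} (h : u ≠ v) :
    (monomial u (1 : K) - monomial v 1).support = {u, v} := by
  classical
  ext w
  simp only [mem_support_iff, coeff_monomial_sub, Finset.mem_insert, Finset.mem_singleton]
  by_cases h1 : u = w <;> by_cases h2 : v = w <;>
    simp_all [eq_comm, sub_eq_zero]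


/-- `w` is a monomial exponent appearing in a nonzero binomial of `J`. -/
def HasPartner (J : Ideal (MvPolynomial (Fin m) K)) (w : Fin m →₀ ℕ) : Prop :=
  ∃ w' : Fin m →₀ ℕ, w' ≠ w ∧ monomial w (1 : K) - monomial w' 1 ∈ J

lemma hasPartner_of_right {J : Ideal (MvPolynomial (Fin m) K)} {c d : Fin m →₀ ℕ}
    (h : c ≠ d) (hJ : monomial c (1 : K) - monomial d 1 ∈ J) : HasPartner J d :=
  ⟨c, h, by rw [← neg_sub]; exact J.neg_mem hJ⟩

def degF (w : Fin m →₀ ℕ) : ℕ := w.sum fun _ n => n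

lemma degF_eq_zero {w : Fin m →₀ ℕ} (h : degF w = 0) : w = 0 := by
  unfold degF Finsupp.sum at h
  ext i
  by_cases hi : i ∈ w.support
  · exact Finset.sum_eq_zero_iff.1 h i hi
  · simpa using Finsupp.notMem_support_iff.1 hi

lemma degF_add (a b : Fin m →₀ ℕ) : degF (a + b) = degF a + degF b :=
  Finsupp.sum_add_index' (fun _ => rfl) (fun _ _ _ => rfl)

lemma degF_lt {a b : Fin m →₀ ℕ} (h1 : a ≤ b) (h2 : a ≠ b) : degF a < degF b := by
  have hb : a + (b - a) = b := add_tsub_cancel_of_le h1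
  have hdeg := degF_add a (b - a)
  rw [hb] at hdeg
  have hz : degF (b - a) ≠ 0 := by
    intro h0
    exact h2 (le_antisymm h1 (tsub_eq_zero_iff_le.1 (degF_eq_zero h0)))
  omega

/-- Key lemma: below every exponent of a nonzero binomial of `J` there is the
support of an indispensable monomial. -/
lemma exists_indisp (J : Ideal (MvPolynomial (Fin m) K)) {c : Fin m →₀ ℕ}
    (hc : HasPartner J c) :
    ∃ w : Fin m →₀ ℕ, IsIndispensableMonomial J w ∧ w.support ⊆ c.support := by
  classical
  set W : Set (Fin m →₀ ℕ) := {w | HasPartner J w ∧ w.support ⊆ c.support} with hWdef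
  have hcW : c ∈ W := ⟨hc, Finset.Subset.refl _⟩
  have hne : (degF '' W).Nonempty := ⟨degF c, c, hcW, rfl⟩
  obtain ⟨w, hwW, hwdeg⟩ := Nat.sInf_mem hne
  refine ⟨w, ?_, hwW.2⟩
  intro S hSbin hSspan
  by_contra hcon
  push_neg at hcon
  set P : Set (Fin m →₀ ℕ) := {e | e ≠ w ∧ HasPartner J e} with hPdef
  have hsub : J ≤ Ideal.span ((fun s => monomial s (1 : K)) '' P) := by
    conv_lhs => rw [← hSspan]
    refine Ideal.span_le.2 fun f hf => ?_
    obtain ⟨cf, df, rfl⟩ := hSbin f hf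
    by_cases hcd : cf = df
    · rw [hcd, sub_self]; exact Submodule.zero_mem _
    · have hfJ : monomial cf (1 : K) - monomial df 1 ∈ J :=
        hSspan ▸ Ideal.subset_span hf
      have hcf : cf ≠ w := by rintro rfl; exact (hcon df).1 hf
      have hdf : df ≠ w := by rintro rfl; exact (hcon cf).2 hf
      exact Ideal.sub_mem _
        (Ideal.subset_span ⟨cf, ⟨hcf, df, fun h => hcd h.symm, hfJ⟩, rfl⟩)
        (Ideal.subset_span ⟨df, ⟨hdf, hasPartner_of_right hcd hfJ⟩, rfl⟩)
  obtain ⟨w', hw'ne, hw'J⟩ := hwW.1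
  have hmem := hsub hw'J
  rw [mem_ideal_span_monomial_image] at hmem
  have hwsupp : w ∈ (monomial w (1 : K) - monomial w' 1).support := by
    rw [support_monomial_sub (fun h => hw'ne h.symm)]
    exact Finset.mem_insert_self _ _
  obtain ⟨e, heP, hle⟩ := hmem w hwsupp
  have heW : e ∈ W := ⟨heP.2, (Finsupp.support_mono hle).trans hwW.2⟩
  have h1 : degF e < degF w := degF_lt hle heP.1
  have h2 : sInf (degF '' W) ≤ degF e := Nat.sInf_le ⟨e, heW, rfl⟩
  omega


lemma span_diff_zero (S : Set (MvPolynomial (Fin m) K)) :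
    Ideal.span (S \ {0}) = Ideal.span S := by
  refine le_antisymm (Ideal.span_mono Set.diff_subset) (Ideal.span_le.2 fun f hf => ?_)
  by_cases h : f = 0
  · rw [h]; exact Submodule.zero_mem _
  · exact Ideal.subset_span ⟨hf, h⟩

lemma indisp_hasPartner {J : Ideal (MvPolynomial (Fin m) K)}
    {S₀ : Set (MvPolynomial (Fin m) K)} (hS₀ : ∀ f ∈ S₀, IsBinomial f)
    (hJ : J = Ideal.span S₀) {u : Fin m →₀ ℕ} (hu : IsIndispensableMonomial J u) :
    HasPartner J u := by
  have hspan : Ideal.span (S₀ \ {0}) = J := by rw [span_diff_zero, hJ]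
  obtain ⟨v, hv | hv⟩ := hu (S₀ \ {0}) (fun f hf => hS₀ f hf.1) hspan
  · have hne : v ≠ u := by
      intro h
      exact hv.2 (monomial_sub_eq_zero_iff.2 h.symm)
    exact ⟨v, hne, hJ ▸ Ideal.subset_span hv.1⟩
  · have hne : v ≠ u := by
      intro h
      exact hv.2 (monomial_sub_eq_zero_iff.2 h)
    have hvJ : monomial v (1 : K) - monomial u 1 ∈ J := hJ ▸ Ideal.subset_span hv.1
    exact ⟨v, hne, by rw [← neg_sub]; exact J.neg_mem hvJ⟩

lemma coeff_pow_smul {u v : Fin m →₀ ℕ} (h : u ≠ v) (k : ℕ) :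
    coeff (k • u) ((monomial u (1 : K) - monomial v 1) ^ k) = 1 := by
  classical
  rw [sub_pow, coeff_sum]
  have hterm : ∀ j ∈ Finset.range (k + 1),
      coeff (k • u) ((-1 : MvPolynomial (Fin m) K) ^ (j + k) * monomial u 1 ^ j *
        monomial v 1 ^ (k - j) * (k.choose j : MvPolynomial (Fin m) K))
      = if j = k then 1 else 0 := by
    intro j hj
    rw [Finset.mem_range, Nat.lt_succ_iff] at hj
    have hrw : (-1 : MvPolynomial (Fin m) K) ^ (j + k) * monomial u 1 ^ j *
        monomial v 1 ^ (k - j) * (k.choose j : MvPolynomial (Fin m) K)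
        = monomial (j • u + (k - j) • v) (((-1 : K) ^ (j + k)) * (k.choose j : K)) := by
      rw [monomial_pow, monomial_pow, one_pow, one_pow, ← C_eq_coe_nat (k.choose j)]
      have : (-1 : MvPolynomial (Fin m) K) ^ (j + k) = C ((-1 : K) ^ (j + k)) := by
        rw [map_pow, map_neg, map_one]
      rw [this]
      have hgrp : C ((-1 : K) ^ (j + k)) * monomial (j • u) (1 : K) *
          monomial ((k - j) • v) 1 * C ((k.choose j : K))
          = C ((-1 : K) ^ (j + k) * (k.choose j : K)) *
            (monomial (j • u) (1 : K) * monomial ((k - j) • v) 1) := by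
        rw [C_mul]; ring
      rw [hgrp, monomial_mul, C_mul_monomial, one_mul, mul_one]
    rw [hrw, coeff_monomial]
    by_cases hjk : j = k
    · subst hjk
      rw [if_pos, if_pos rfl]
      · simp [Nat.choose_self]
      · simp
    · rw [if_neg, if_neg hjk]
      intro heq
      obtain ⟨t, ht⟩ : ∃ t, u t ≠ v t := by
        by_contra hcon
        push_neg at hcon
        exact h (Finsupp.ext hcon)
      have := congrArg (fun f => f t) heq
      simp only [Finsupp.add_apply, Finsupp.smul_apply, smul_eq_mul] at this
      -- this : j * u t + (k - j) * v t = k * u t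
      have hk' : k * u t = j * u t + (k - j) * u t := by
        rw [← add_mul]
        congr 1
        omega
      rw [hk'] at this
      have h2 := Nat.add_left_cancel this
      have hkj : k - j ≠ 0 := by omega
      exact ht (Nat.eq_of_mul_eq_mul_left (Nat.pos_of_ne_zero hkj) h2).symm
  rw [Finset.sum_congr rfl hterm, Finset.sum_ite_eq' (Finset.range (k + 1)) k (fun _ => (1 : K))]
  rw [if_pos (Finset.self_mem_range_succ k)]


lemma sign_support {p : MvPolynomial (Fin m) K} {c d : Fin m →₀ ℕ} (h : c ≠ d)
    (hsign : p = monomial c (1 : K) - monomial d 1 ∨ p = monomial d (1 : K) - monomial c 1) :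
    p.support = {c, d} := by
  rcases hsign with rfl | rfl
  · exact support_monomial_sub h
  · rw [support_monomial_sub (fun hh => h hh.symm), Finset.pair_comm]

lemma sign_mem {J : Ideal (MvPolynomial (Fin m) K)} {p : MvPolynomial (Fin m) K}
    {c d : Fin m →₀ ℕ}
    (hsign : p = monomial c (1 : K) - monomial d 1 ∨ p = monomial d (1 : K) - monomial c 1)
    (hp : p ∈ J) :
    monomial c (1 : K) - monomial d 1 ∈ J ∧ monomial d (1 : K) - monomial c 1 ∈ J := by
  rcases hsign with rfl | rfl
  · exact ⟨hp, by rw [← neg_sub]; exact J.neg_mem hp⟩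
  · exact ⟨by rw [← neg_sub]; exact J.neg_mem hp, hp⟩

/-- The covering lemma: for each `E ∈ Tmin J`, some `B i` has a monomial with
support exactly `E`. -/
lemma cover {J : Ideal (MvPolynomial (Fin m) K)}
    {S₀ : Set (MvPolynomial (Fin m) K)} (hS₀ : ∀ f ∈ S₀, IsBinomial f)
    (hJ : J = Ideal.span S₀)
    (hno : ∀ u : Fin m →₀ ℕ, u ≠ 0 → (monomial u (1 : K) - 1) ∉ J)
    {s : ℕ} {B : Fin s → MvPolynomial (Fin m) K}
    (hBbin : ∀ i, IsBinomial (B i)) (hBJ : ∀ i, B i ∈ J)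
    (hBrad : (Ideal.span (Set.range B)).radical = J.radical)
    {E : Finset (Fin m)} (hE : E ∈ Tmin J) :
    ∃ (i : Fin s) (c d : Fin m →₀ ℕ), c ≠ d ∧
      (B i = monomial c (1 : K) - monomial d 1 ∨ B i = monomial d (1 : K) - monomial c 1) ∧
      c.support = E := by
  classical
  obtain ⟨⟨u, hu, hsuppu⟩, hmin⟩ := hE
  obtain ⟨v, hvne, hvJ⟩ := indisp_hasPartner hS₀ hJ hu
  have hu0 : u ≠ 0 := by
    rintro rfl
    refine hno v hvne ?_
    have : monomial v (1 : K) - monomial 0 1 ∈ J := by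
      rw [← neg_sub]; exact J.neg_mem hvJ
    simpa using this
  have hrad : monomial u (1 : K) - monomial v 1 ∈ (Ideal.span (Set.range B)).radical := by
    rw [hBrad]; exact Ideal.le_radical hvJ
  rw [Ideal.mem_radical_iff] at hrad
  obtain ⟨k, hk⟩ := hrad
  rcases Nat.eq_zero_or_pos k with rfl | hkpos
  · exfalso
    rw [pow_zero] at hk
    have h1 : (1 : MvPolynomial (Fin m) K) ∈ J.radical := hBrad ▸ Ideal.le_radical hk
    have hJtop : J = ⊤ :=
      Ideal.radical_eq_top.1 ((Ideal.eq_top_iff_one _).2 h1)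
    exact hno u hu0 (hJtop ▸ Submodule.mem_top)
  · set P : Set (Fin m →₀ ℕ) := {e | ∃ i : Fin s, ∃ d, e ≠ d ∧
        (B i = monomial e (1 : K) - monomial d 1 ∨ B i = monomial d (1 : K) - monomial e 1)}
      with hPdef
    have hsub : Ideal.span (Set.range B) ≤
        Ideal.span ((fun s => monomial s (1 : K)) '' P) := by
      refine Ideal.span_le.2 ?_
      rintro f ⟨i, rfl⟩
      obtain ⟨cf, df, hf⟩ := hBbin i
      by_cases hcd : cf = df
      · rw [hf, hcd, sub_self]; exact Submodule.zero_mem _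
      · rw [hf]
        exact Ideal.sub_mem _
          (Ideal.subset_span ⟨cf, ⟨i, df, hcd, Or.inl hf⟩, rfl⟩)
          (Ideal.subset_span ⟨df, ⟨i, cf, fun hh => hcd hh.symm, Or.inr hf⟩, rfl⟩)
    have hkmem := hsub hk
    rw [mem_ideal_span_monomial_image] at hkmem
    have hne' : u ≠ v := fun hh => hvne hh.symm
    have hsupp : (k • u) ∈ ((monomial u (1 : K) - monomial v 1) ^ k).support := by
      rw [mem_support_iff, coeff_pow_smul hne']
      exact one_ne_zero
    obtain ⟨e, heP, hle⟩ := hkmem _ hsupp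
    have hze : e.support ⊆ E := by
      intro j hjmem
      rw [← hsuppu, Finsupp.mem_support_iff]
      rw [Finsupp.mem_support_iff] at hjmem
      have hj := hle j
      simp only [Finsupp.smul_apply, smul_eq_mul] at hj
      intro h0
      rw [h0, mul_zero, Nat.le_zero] at hj
      exact hjmem hj
    obtain ⟨i, d, hed, hsign⟩ := heP
    have heJ : HasPartner J e :=
      ⟨d, fun hh => hed hh.symm, (sign_mem hsign (hBJ i)).1⟩
    obtain ⟨w, hwind, hwsupp⟩ := exists_indisp J heJ
    have hwE : w.support = E := hmin _ ⟨w, hwind, rfl⟩ (hwsupp.trans hze)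
    have heE : e.support = E := by
      refine Finset.Subset.antisymm hze ?_
      rw [← hwE]; exact hwsupp
    exact ⟨i, e, d, hed, hsign, heE⟩


lemma bar_set_nonempty {J : Ideal (MvPolynomial (Fin m) K)}
    {S₀ : Set (MvPolynomial (Fin m) K)} (hS₀ : ∀ f ∈ S₀, IsBinomial f)
    (hJ : J = Ideal.span S₀) :
    {s | ∃ B : Fin s → MvPolynomial (Fin m) K,
      (∀ i, IsBinomial (B i)) ∧ (∀ i, B i ∈ J) ∧
      (Ideal.span (Set.range B)).radical = J.radical}.Nonempty := by
  classical
  obtain ⟨T, hT⟩ := IsNoetherian.noetherian J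
  have hchoice : ∀ t : {x // x ∈ T},
      ∃ U : Finset (MvPolynomial (Fin m) K), ↑U ⊆ S₀ ∧
        (t : MvPolynomial (Fin m) K) ∈ Ideal.span (U : Set (MvPolynomial (Fin m) K)) := by
    intro t
    have ht : (t : MvPolynomial (Fin m) K) ∈ Ideal.span S₀ := by
      rw [← hJ, ← hT]
      exact Submodule.subset_span t.2
    exact Submodule.mem_span_finite_of_mem_span ht
  choose U hU1 hU2 using hchoice
  set V : Finset (MvPolynomial (Fin m) K) := T.attach.biUnion U with hV
  have hVsub : (V : Set (MvPolynomial (Fin m) K)) ⊆ S₀ := by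
    intro f hf
    rw [Finset.mem_coe, hV, Finset.mem_biUnion] at hf
    obtain ⟨t, _, hft⟩ := hf
    exact hU1 t hft
  have hVspan : Ideal.span (V : Set (MvPolynomial (Fin m) K)) = J := by
    refine le_antisymm (Ideal.span_le.2 fun f hf => ?_) ?_
    · rw [hJ]; exact Ideal.subset_span (hVsub hf)
    · rw [← hT]
      refine Ideal.span_le.2 fun t ht => ?_
      have hsub : (U ⟨t, ht⟩ : Set (MvPolynomial (Fin m) K)) ⊆ V := by
        intro f hf
        rw [Finset.mem_coe, hV, Finset.mem_biUnion]
        exact ⟨⟨t, ht⟩, Finset.mem_attach _ _, hf⟩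
      exact Ideal.span_mono hsub (hU2 ⟨t, ht⟩)
  set B : Fin V.card → MvPolynomial (Fin m) K := fun i => ↑(V.equivFin.symm i) with hB
  have hrange : Set.range B = (V : Set (MvPolynomial (Fin m) K)) := by
    ext f
    constructor
    · rintro ⟨i, rfl⟩; exact (V.equivFin.symm i).2
    · intro hf; exact ⟨V.equivFin ⟨f, hf⟩, by simp [hB]⟩
  refine ⟨V.card, B, fun i => hS₀ _ (hVsub (V.equivFin.symm i).2), fun i => ?_, ?_⟩
  · rw [hJ]; exact Ideal.subset_span (hVsub (V.equivFin.symm i).2)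
  · rw [hrange, hVspan]

end Aux

theorem stmt_1 (K : Type*) [Field K] (m : ℕ) (J : Ideal (MvPolynomial (Fin m) K))
    -- `J` is generated by binomials
    (S₀ : Set (MvPolynomial (Fin m) K)) (hS₀ : ∀ f ∈ S₀, IsBinomial f)
    (hJ : J = Ideal.span S₀)
    -- `J` contains no binomial `x^u − 1` with `u ≠ 0`
    (hno : ∀ u : Fin m →₀ ℕ, u ≠ 0 → (monomial u (1 : K) - 1) ∉ J) :
    deltaQ J {0, 1} ≤ bar J := by
  classical
  obtain ⟨B, hBbin, hBJ, hBrad⟩ : ∃ B : Fin (bar J) → MvPolynomial (Fin m) K,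
      (∀ i, IsBinomial (B i)) ∧ (∀ i, B i ∈ J) ∧
      (Ideal.span (Set.range B)).radical = J.radical :=
    Nat.sInf_mem (bar_set_nonempty hS₀ hJ)
  have key : ∀ E : Finset (Fin m), E ∈ Tmin J →
      ∃ (i : Fin (bar J)) (c d : Fin m →₀ ℕ), c ≠ d ∧
        (B i = monomial c (1 : K) - monomial d 1 ∨ B i = monomial d (1 : K) - monomial c 1) ∧
        c.support = E :=
    fun E hE => cover hS₀ hJ hno hBbin hBJ hBrad hE
  choose gi gc gd hgne hgsign hgsupp using key
  set TF : Finset (Finset (Fin m)) := (Set.toFinite (Tmin J)).toFinset with hTF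
  have hmemTF : ∀ {E : Finset (Fin m)}, E ∈ TF ↔ E ∈ Tmin J :=
    fun {E} => Set.Finite.mem_toFinset _
  set cls : Finset (Fin m) → Option (Fin (bar J)) :=
    fun E => if h : E ∈ Tmin J then some (gi E h) else none with hcls
  have hclsE : ∀ {E : Finset (Fin m)} (h : E ∈ Tmin J), cls E = some (gi E h) :=
    fun {E} h => dif_pos h
  set fib : Finset (Fin m) → Finset (Finset (Fin m)) :=
    fun E => TF.filter (fun E' => cls E' = cls E) with hfib
  set N : Finset (Finset (Finset (Fin m))) := TF.image fib with hN
  -- basic membership facts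
  have hself : ∀ {E : Finset (Fin m)}, E ∈ TF → E ∈ fib E :=
    fun {E} hE => Finset.mem_filter.2 ⟨hE, rfl⟩
  have hfibmem : ∀ {E E' : Finset (Fin m)}, E' ∈ fib E → E' ∈ TF ∧ cls E' = cls E :=
    fun {E E'} h => Finset.mem_filter.1 h
  -- structure of the fibers
  have hpair : ∀ (E : Finset (Fin m)) (hE : E ∈ Tmin J) (E' : Finset (Fin m)),
      E' ∈ fib E → ∃ hE' : E' ∈ Tmin J,
        gi E' hE' = gi E hE ∧
        ({gc E' hE', gd E' hE'} : Finset (Fin m →₀ ℕ)) = {gc E hE, gd E hE} := by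
    intro E hE E' hmem
    obtain ⟨hE'TF, hclseq⟩ := hfibmem hmem
    have hE' : E' ∈ Tmin J := hmemTF.1 hE'TF
    refine ⟨hE', ?_, ?_⟩
    · have := hclseq
      rw [hclsE hE', hclsE hE] at this
      exact Option.some.inj this
    · have hgieq : gi E' hE' = gi E hE := by
        have := hclseq
        rw [hclsE hE', hclsE hE] at this
        exact Option.some.inj this
      have h1 : (B (gi E' hE')).support = {gc E' hE', gd E' hE'} :=
        sign_support (hgne E' hE') (hgsign E' hE')
      have h2 : (B (gi E hE)).support = {gc E hE, gd E hE} :=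
        sign_support (hgne E hE) (hgsign E hE)
      rw [hgieq, h2] at h1
      exact h1.symm
  -- each fiber is a simplex with at most two vertices
  have hsimplex : ∀ (E : Finset (Fin m)), E ∈ TF → IsSimplex J (fib E) := by
    intro E hETF
    have hE : E ∈ Tmin J := hmemTF.1 hETF
    refine ⟨⟨E, hself hETF⟩, fun E' hE' => hmemTF.1 (hfibmem hE').1, ?_⟩
    refine ⟨fun F => if h : F ∈ Tmin J then gc F h else 0, ?_, ?_⟩
    · intro E' hmem
      obtain ⟨hE', _, _⟩ := hpair E hE E' hmem
      simp only []
      rw [dif_pos hE']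
      exact hgsupp E' hE'
    · intro E₁ h₁ E₂ h₂
      obtain ⟨hE₁, _, hp₁⟩ := hpair E hE E₁ h₁
      obtain ⟨hE₂, _, hp₂⟩ := hpair E hE E₂ h₂
      simp only []
      rw [dif_pos hE₁, dif_pos hE₂]
      have hmem2 : gc E₂ hE₂ ∈ ({gc E₁ hE₁, gd E₁ hE₁} : Finset (Fin m →₀ ℕ)) := by
        rw [hp₁, ← hp₂]
        exact Finset.mem_insert_self _ _
      rcases Finset.mem_insert.1 hmem2 with heq | heq
      · rw [heq, sub_self]; exact Submodule.zero_mem _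
      · rw [Finset.mem_singleton] at heq
        rw [heq]
        exact (sign_mem (hgsign E₁ hE₁) (hBJ _)).1
  have hcard2 : ∀ (E : Finset (Fin m)), E ∈ TF → (fib E).card ≤ 2 := by
    intro E hETF
    have hE : E ∈ Tmin J := hmemTF.1 hETF
    have hsub : fib E ⊆ ({gc E hE, gd E hE} : Finset (Fin m →₀ ℕ)).image Finsupp.support := by
      intro E' hmem
      obtain ⟨hE', _, hp⟩ := hpair E hE E' hmem
      refine Finset.mem_image.2 ⟨gc E' hE', ?_, hgsupp E' hE'⟩
      rw [← hp]
      exact Finset.mem_insert_self _ _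
    calc (fib E).card ≤ _ := Finset.card_le_card hsub
      _ ≤ ({gc E hE, gd E hE} : Finset (Fin m →₀ ℕ)).card := Finset.card_image_le
      _ ≤ 2 := by
          refine le_trans (Finset.card_insert_le _ _) ?_
          simp
  -- N is a Q-matching
  have hmatch : IsQMatching J {0, 1} N := by
    constructor
    · intro T hT
      obtain ⟨E, hETF, rfl⟩ := Finset.mem_image.1 hT
      refine ⟨hsimplex E hETF, ?_⟩
      have h1 : 1 ≤ (fib E).card := Finset.card_pos.2 ⟨E, hself hETF⟩
      have h2 := hcard2 E hETF
      simp only [Set.mem_insert_iff, Set.mem_singleton_iff]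
      omega
    · intro T hT T' hT' hne
      obtain ⟨E₁, hE₁, rfl⟩ := Finset.mem_image.1 hT
      obtain ⟨E₂, hE₂, rfl⟩ := Finset.mem_image.1 hT'
      rw [Finset.disjoint_left]
      intro x hx₁ hx₂
      apply hne
      have hc₁ : cls x = cls E₁ := (hfibmem hx₁).2
      have hc₂ : cls x = cls E₂ := (hfibmem hx₂).2
      have : cls E₁ = cls E₂ := hc₁.symm.trans hc₂
      rw [hfib]
      simp only [this]
  -- N covers all of TF, hence is maximal
  have hNsup : N.sup id = TF := by
    refine Finset.Subset.antisymm ?_ ?_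
    · intro x hx
      obtain ⟨T, hT, hxT⟩ := Finset.mem_sup.1 hx
      obtain ⟨E, _, rfl⟩ := Finset.mem_image.1 hT
      exact (hfibmem hxT).1
    · intro E hE
      exact Finset.mem_sup.2 ⟨fib E, Finset.mem_image_of_mem fib hE, hself hE⟩
  have hmax : IsMaximalQMatching J {0, 1} N := by
    refine ⟨hmatch, fun N' hN' => ?_⟩
    rw [hNsup]
    refine Finset.card_le_card ?_
    intro x hx
    obtain ⟨T, hT, hxT⟩ := Finset.mem_sup.1 hx
    exact hmemTF.2 (((hN'.1 T hT).1).2.1 x hxT)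
  -- N has at most `bar J` elements
  have hcardN : N.card ≤ bar J := by
    have himg : N = (TF.image cls).image
        (fun o => TF.filter (fun E' => cls E' = o)) := by
      rw [hN, Finset.image_image]
      rfl
    have h1 : N.card ≤ (TF.image cls).card := by
      rw [himg]
      exact Finset.card_image_le
    have h2 : TF.image cls ⊆ (Finset.univ : Finset (Fin (bar J))).image some := by
      intro o ho
      obtain ⟨E, hETF, rfl⟩ := Finset.mem_image.1 ho
      exact Finset.mem_image.2 ⟨gi E (hmemTF.1 hETF), Finset.mem_univ _,
        (hclsE (hmemTF.1 hETF)).symm⟩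
    have h3 : ((Finset.univ : Finset (Fin (bar J))).image some).card = bar J := by
      rw [Finset.card_image_of_injective _ (Option.some_injective _), Finset.card_univ,
        Fintype.card_fin]
    calc N.card ≤ (TF.image cls).card := h1
      _ ≤ _ := Finset.card_le_card h2
      _ = bar J := h3
  exact le_trans (Nat.sInf_le ⟨N, hmax, rfl⟩) hcardN
end
end

section
/- Let J ⊆ K[x_1,…,x_m] be an ideal generated by binomials containing no binomial of the form x^u − 1 with u ≠ 0. Then ara_c(J) ≥ δ(Δ_J)_ℕ, i.e., the J-complete arithmetical rank of J is at least the minimum cardinality of a maximal ℕ-matching (a matching by simplices of arbitrary dimension) in the simplicial complex Δ_J. -/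
/-! The supports in `T_min` of the monomials of one `J`-complete polynomial span a simplex of
`Δ_J`. If `F_1, …, F_s` are `J`-complete and generate `J` up to radical, every `E ∈ T_min` is the
support of a monomial of some `F_i`: no monomial with support strictly inside `E` is related
modulo `J` to another one (a minimal such monomial would be indispensable), and a single monomial
is never in `J`, which vanishes at `(1, …, 1)`; so otherwise every `F_i`, and hence `rad J`,
lies in the prime ideal of polynomials killed by setting the variables outside `E` to `0`, which
does not contain `x^u - x^w` for an indispensable `x^u` with support `E`. Making the `s`
simplices pairwise disjoint then gives a matching covering `T_min`, hence a maximal one, with at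
most `s` simplices. -/

open MvPolynomial

noncomputable section

/-- A polynomial `F` is `I`-complete if for any two monomials `M, N` occurring in `F`
with nonzero coefficient, `M − N ∈ I`. -/
def IsCompletePolynomial {K : Type*} [Field K] {m : ℕ} (I : Ideal (MvPolynomial (Fin m) K))
    (F : MvPolynomial (Fin m) K) : Prop :=
  ∀ u ∈ F.support, ∀ v ∈ F.support, (monomial u (1 : K) - monomial v 1) ∈ I

/-- The `I`-complete arithmetical rank: the smallest `s` such that there are `s`
`I`-complete polynomials in `I` generating `I` up to radical. -/
def araC {K : Type*} [Field K] {m : ℕ} (I : Ideal (MvPolynomial (Fin m) K)) : ℕ :=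
  sInf {s | ∃ F : Fin s → MvPolynomial (Fin m) K,
    (∀ i, F i ∈ I ∧ IsCompletePolynomial I (F i)) ∧
    (Ideal.span (Set.range F)).radical = I.radical}


theorem MvPolynomial.killCompl_eq_zero_iff {R σ τ : Type*} [CommSemiring R] {f : σ → τ}
    (hf : Function.Injective f) {p : MvPolynomial τ R} :
    killCompl hf p = 0 ↔ ∀ c ∈ p.support, ¬ ↑c.support ⊆ Set.range f := by
  classical
  rw [← support_eq_empty, support_killCompl, Finset.eq_empty_iff_forall_notMem]
  constructor
  · intro h c hc hsub
    refine h (c.comapDomain f hf.injOn) ?_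
    rwa [Finset.mem_preimage, Finsupp.mapDomain_comapDomain f hf c hsub]
  · intro h s hs
    refine h _ (Finset.mem_preimage.mp hs) ?_
    exact (Finset.coe_subset.mpr Finsupp.mapDomain_support).trans (by simp)

theorem Finset.exists_pairwiseDisjoint_refinement {ι α : Type*} [Fintype ι] [LinearOrder ι]
    [LocallyFiniteOrderBot ι] [DecidableEq α] (f : ι → Finset α) :
    ∃ P : Finset (Finset α), (∀ p ∈ P, p.Nonempty ∧ ∃ i, p ⊆ f i) ∧
      (P : Set (Finset α)).PairwiseDisjoint id ∧ P.sup id = univ.sup f ∧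
      P.card ≤ Fintype.card ι := by
  refine ⟨(univ.image (disjointed f)).erase ⊥, ?_, ?_, ?_, ?_⟩
  · intro p hp
    obtain ⟨hp, hpi⟩ := Finset.mem_erase.mp hp
    obtain ⟨i, -, rfl⟩ := Finset.mem_image.mp hpi
    exact ⟨Finset.nonempty_iff_ne_empty.mpr hp, i, disjointed_le f i⟩
  · rintro _ hp _ hq hpq
    obtain ⟨i, -, rfl⟩ := Finset.mem_image.mp (Finset.mem_of_mem_erase hp)
    obtain ⟨j, -, rfl⟩ := Finset.mem_image.mp (Finset.mem_of_mem_erase hq)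
    exact disjoint_disjointed f (fun hij => hpq (congrArg _ hij))
  · rw [Finset.sup_erase_bot, Finset.sup_image, Function.id_comp, Fintype.sup_disjointed]
  · exact (Finset.card_erase_le).trans (Finset.card_image_le.trans_eq Finset.card_univ)

theorem MvPolynomial.eq_or_eq_of_mem_support_monomial_sub {R σ : Type*} [CommRing R]
    {p q c : σ →₀ ℕ} {a b : R} (hc : c ∈ (monomial p a - monomial q b).support) :
    c = p ∨ c = q := by
  classical
  simpa using (support_sub _ _ _).trans
    (Finset.union_subset_union support_monomial_subset support_monomial_subset) hc

section

variable {K : Type*} [Field K] {m : ℕ}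

theorem IsBinomial.isCompletePolynomial {J : Ideal (MvPolynomial (Fin m) K)}
    {f : MvPolynomial (Fin m) K} (hf : IsBinomial f) (hfJ : f ∈ J) : IsCompletePolynomial J f := by
  obtain ⟨p, q, rfl⟩ := hf
  have hqp : monomial q (1 : K) - monomial p 1 ∈ J := by simpa using J.neg_mem hfJ
  intro a ha b hb
  rcases eq_or_eq_of_mem_support_monomial_sub ha with rfl | rfl <;>
    rcases eq_or_eq_of_mem_support_monomial_sub hb with rfl | rfl <;> simp_all

theorem eval_one_eq_zero_of_mem_span {S₀ : Set (MvPolynomial (Fin m) K)}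
    (hS₀ : ∀ f ∈ S₀, IsBinomial f) {g : MvPolynomial (Fin m) K} (hg : g ∈ Ideal.span S₀) :
    eval 1 g = 0 := by
  have : Ideal.span S₀ ≤ RingHom.ker (eval 1) := by
    rw [Ideal.span_le]
    intro f hf
    obtain ⟨u, v, rfl⟩ := hS₀ f hf
    simp [eval_monomial]
  exact this hg

theorem exists_ne_mem_support_of_mem_span {S₀ : Set (MvPolynomial (Fin m) K)}
    (hS₀ : ∀ f ∈ S₀, IsBinomial f) {g : MvPolynomial (Fin m) K} (hg : g ∈ Ideal.span S₀)
    {c : Fin m →₀ ℕ} (hc : c ∈ g.support) : ∃ c' ∈ g.support, c' ≠ c := by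
  by_contra! h
  have hg1 := eval_one_eq_zero_of_mem_span hS₀ hg
  rw [eval_eq, Finset.sum_eq_single_of_mem c hc fun d hd hdc => absurd (h d hd) hdc] at hg1
  exact mem_support_iff.mp hc (by simpa using hg1)

theorem IsIndispensableMonomial.exists_ne_sub_mem {S₀ : Set (MvPolynomial (Fin m) K)}
    (hS₀ : ∀ f ∈ S₀, IsBinomial f) {u : Fin m →₀ ℕ}
    (hu : IsIndispensableMonomial (Ideal.span S₀) u) :
    ∃ w ≠ u, monomial u (1 : K) - monomial w 1 ∈ Ideal.span S₀ := by
  obtain ⟨w, hw⟩ := hu (S₀ \ {0}) (fun f hf => hS₀ f hf.1) Ideal.span_sdiff_singleton_zero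
  refine ⟨w, ?_, ?_⟩
  · rintro rfl
    simp at hw
  · rcases hw with hw | hw
    · exact Ideal.subset_span hw.1
    · simpa using neg_mem (Ideal.subset_span hw.1 : _ ∈ Ideal.span S₀)

theorem isIndispensableMonomial_of_forall_lt {J : Ideal (MvPolynomial (Fin m) K)}
    {b b' : Fin m →₀ ℕ} (hb' : b' ≠ b) (hbJ : monomial b (1 : K) - monomial b' 1 ∈ J)
    (hmin : ∀ a < b, ∀ a', monomial a (1 : K) - monomial a' 1 ∈ J → a' = a) :
    IsIndispensableMonomial J b := by
  intro S hSbin hSJ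
  by_contra! hS
  -- If no generator involves `x^b`, all of them lie in the monomial ideal of the `x^c`, `c ≰ b`.
  have hgen : ∀ p q, p ≠ q → monomial p (1 : K) - monomial q 1 ∈ J → p ≠ b → ¬ p ≤ b :=
    fun p q hpq hJ hpb hle => hpq (hmin p (lt_of_le_of_ne hle hpb) q hJ).symm
  have hle : J ≤ Ideal.span ((fun c => monomial c (1 : K)) '' {c | ¬ c ≤ b}) := by
    rw [← hSJ, Ideal.span_le]
    intro f hf
    obtain ⟨p, q, rfl⟩ := hSbin f hf
    have hfJ : monomial p (1 : K) - monomial q 1 ∈ J := hSJ ▸ Ideal.subset_span hf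
    rw [SetLike.mem_coe, mem_ideal_span_monomial_image]
    intro c hc
    refine ⟨c, ?_, le_rfl⟩
    obtain hpq | hpq := eq_or_ne p q
    · simp [hpq] at hc
    rcases eq_or_eq_of_mem_support_monomial_sub hc with rfl | rfl
    · exact hgen c q hpq hfJ fun h => (hS q).1 (h ▸ hf)
    · exact hgen c p hpq.symm (by simpa using J.neg_mem hfJ) fun h => (hS p).2 (h ▸ hf)
  obtain ⟨c, hcb, hcb'⟩ := mem_ideal_span_monomial_image.mp (hle hbJ) b
    (by simp [mem_support_iff, coeff_monomial, hb'])
  exact hcb hcb'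

theorem eq_of_sub_mem_of_support_ssubset {J : Ideal (MvPolynomial (Fin m) K)}
    {E : Finset (Fin m)} (hE : E ∈ Tmin J) {a a' : Fin m →₀ ℕ} (ha : a.support ⊂ E)
    (hJ : monomial a (1 : K) - monomial a' 1 ∈ J) : a' = a := by
  by_contra! hne
  obtain ⟨b, ⟨hbE, b', hb', hbJ⟩, hbmin⟩ := wellFounded_lt.has_min
    {a | a.support ⊂ E ∧ ∃ a' ≠ a, monomial a (1 : K) - monomial a' 1 ∈ J} ⟨a, ha, a', hne, hJ⟩
  have hb : IsIndispensableMonomial J b :=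
    isIndispensableMonomial_of_forall_lt hb' hbJ fun c hcb c' hcJ => by
      by_contra! hc'
      exact hbmin c ⟨(Finsupp.support_mono hcb.le).trans_ssubset hbE, c', hc', hcJ⟩ hcb
  exact hbE.ne (hE.2 _ ⟨b, hb, rfl⟩ hbE.subset)

theorem exists_mem_support_support_eq {S₀ : Set (MvPolynomial (Fin m) K)}
    (hS₀ : ∀ f ∈ S₀, IsBinomial f) {E : Finset (Fin m)} (hE : E ∈ Tmin (Ideal.span S₀))
    {s : ℕ} {F : Fin s → MvPolynomial (Fin m) K}
    (hF : ∀ i, F i ∈ Ideal.span S₀ ∧ IsCompletePolynomial (Ideal.span S₀) (F i))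
    (hrad : (Ideal.span (Set.range F)).radical = (Ideal.span S₀).radical) :
    ∃ i, ∃ c ∈ (F i).support, c.support = E := by
  by_contra! hcontra
  set J := Ideal.span S₀
  let π := killCompl (R := K) (Subtype.val_injective : Function.Injective ((↑) : E → Fin m))
  have hπ : ∀ g : MvPolynomial (Fin m) K,
      g ∈ RingHom.ker π ↔ ∀ c ∈ g.support, ¬ c.support ⊆ E := by
    intro g
    rw [RingHom.mem_ker, killCompl_eq_zero_iff]
    simp
  have hFπ : ∀ i, F i ∈ RingHom.ker π := by
    intro i
    rw [hπ]
    intro c hc hcE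
    obtain ⟨c', hc', hne⟩ := exists_ne_mem_support_of_mem_span hS₀ (hF i).1 hc
    exact hne (eq_of_sub_mem_of_support_ssubset hE (hcE.ssubset_of_ne (hcontra i c hc))
      ((hF i).2 c hc c' hc'))
  have hJπ : J ≤ RingHom.ker π := calc
    J ≤ J.radical := Ideal.le_radical
    _ = (Ideal.span (Set.range F)).radical := hrad.symm
    _ ≤ RingHom.ker π := (RingHom.ker_isPrime π).radical_le_iff.mpr
      (Ideal.span_le.mpr (Set.range_subset_iff.mpr hFπ))
  obtain ⟨u, hu, huE⟩ := hE.1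
  obtain ⟨w, hwu, huw⟩ := hu.exists_ne_sub_mem hS₀
  exact (hπ _).mp (hJπ huw) u (by simp [mem_support_iff, coeff_monomial, hwu]) huE.subset

theorem isSimplex_of_forall_mem_support {J : Ideal (MvPolynomial (Fin m) K)}
    {F : MvPolynomial (Fin m) K} (hF : IsCompletePolynomial J F) {T : Finset (Finset (Fin m))}
    (hT : T.Nonempty) (hTmin : ∀ E ∈ T, E ∈ Tmin J)
    (hTF : ∀ E ∈ T, ∃ c ∈ F.support, c.support = E) : IsSimplex J T := by
  choose! M hMF hME using hTF
  exact ⟨hT, hTmin, M, hME, fun E hE E' hE' => hF _ (hMF E hE) _ (hMF E' hE')⟩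

theorem isMaximalQMatching_of_forall_mem_sup {J : Ideal (MvPolynomial (Fin m) K)} {Q : Set ℕ}
    {N : Finset (Finset (Finset (Fin m)))} (hN : IsQMatching J Q N)
    (hcov : ∀ E ∈ Tmin J, E ∈ N.sup id) : IsMaximalQMatching J Q N :=
  ⟨hN, fun N' hN' => Finset.card_le_card fun E hE => by
    obtain ⟨T, hT, hET⟩ := Finset.mem_sup.mp hE
    exact hcov E ((hN'.1 T hT).1.2.1 E hET)⟩

theorem deltaQ_univ_le_of_radical_eq {S₀ : Set (MvPolynomial (Fin m) K)}
    (hS₀ : ∀ f ∈ S₀, IsBinomial f) {s : ℕ} (F : Fin s → MvPolynomial (Fin m) K)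
    (hF : ∀ i, F i ∈ Ideal.span S₀ ∧ IsCompletePolynomial (Ideal.span S₀) (F i))
    (hrad : (Ideal.span (Set.range F)).radical = (Ideal.span S₀).radical) :
    deltaQ (Ideal.span S₀) Set.univ ≤ s := by
  classical
  set J := Ideal.span S₀
  let T : Fin s → Finset (Finset (Fin m)) := fun i =>
    ((F i).support.image Finsupp.support).filter (· ∈ Tmin J)
  obtain ⟨N, hNT, hNdisj, hNsup, hNcard⟩ := Finset.exists_pairwiseDisjoint_refinement T
  have hN : IsQMatching J Set.univ N := by
    refine ⟨fun D hD => ⟨?_, Set.mem_univ _⟩, fun D hD D' hD' hne => hNdisj hD hD' hne⟩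
    obtain ⟨hne, i, hDi⟩ := hNT D hD
    refine isSimplex_of_forall_mem_support (hF i).2 hne
      (fun E hE => (Finset.mem_filter.mp (hDi hE)).2) fun E hE => ?_
    simpa using (Finset.mem_filter.mp (hDi hE)).1
  have hcov : ∀ E ∈ Tmin J, E ∈ N.sup id := by
    intro E hE
    obtain ⟨i, c, hc, hcE⟩ := exists_mem_support_support_eq hS₀ hE hF hrad
    rw [hNsup]
    exact Finset.mem_sup.mpr ⟨i, Finset.mem_univ _,
      Finset.mem_filter.mpr ⟨Finset.mem_image.mpr ⟨c, hc, hcE⟩, hE⟩⟩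
  calc deltaQ J Set.univ ≤ N.card :=
        Nat.sInf_le ⟨N, isMaximalQMatching_of_forall_mem_sup hN hcov, rfl⟩
    _ ≤ s := hNcard.trans_eq (Fintype.card_fin s)

theorem exists_complete_generators {S₀ : Set (MvPolynomial (Fin m) K)}
    (hS₀ : ∀ f ∈ S₀, IsBinomial f) :
    ∃ (s : ℕ) (F : Fin s → MvPolynomial (Fin m) K),
      (∀ i, F i ∈ Ideal.span S₀ ∧ IsCompletePolynomial (Ideal.span S₀) (F i)) ∧
      Ideal.span (Set.range F) = Ideal.span S₀ := by
  obtain ⟨t, htS, hspan⟩ :=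
    (Submodule.fg_span_iff_fg_span_finset_subset S₀).mp
      (IsNoetherian.noetherian (Ideal.span S₀))
  obtain ⟨s, F, hF⟩ := t.finite_toSet.fin_embedding
  have hFS : ∀ i, F i ∈ S₀ := fun i => htS (hF ▸ Set.mem_range_self i)
  refine ⟨s, F, fun i => ?_, ?_⟩
  · have hmem : F i ∈ Ideal.span S₀ := Ideal.subset_span (hFS i)
    exact ⟨hmem, (hS₀ _ (hFS i)).isCompletePolynomial hmem⟩
  · rw [hF]
    exact hspan.symm

theorem exists_araC_spec {I : Ideal (MvPolynomial (Fin m) K)}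
    (h : ∃ (s : ℕ) (F : Fin s → MvPolynomial (Fin m) K),
      (∀ i, F i ∈ I ∧ IsCompletePolynomial I (F i)) ∧
      (Ideal.span (Set.range F)).radical = I.radical) :
    ∃ F : Fin (araC I) → MvPolynomial (Fin m) K,
      (∀ i, F i ∈ I ∧ IsCompletePolynomial I (F i)) ∧
      (Ideal.span (Set.range F)).radical = I.radical :=
  Nat.sInf_mem h

end

theorem stmt_2_general (K : Type*) [Field K] (m : ℕ) (J : Ideal (MvPolynomial (Fin m) K))
    -- `J` is generated by binomials
    (S₀ : Set (MvPolynomial (Fin m) K)) (hS₀ : ∀ f ∈ S₀, IsBinomial f)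
    (hJ : J = Ideal.span S₀) :
    deltaQ J Set.univ ≤ araC J := by
  subst hJ
  obtain ⟨s, F, hF, hspan⟩ := exists_complete_generators hS₀
  obtain ⟨G, hG, hrad⟩ := exists_araC_spec ⟨s, F, hF, by rw [hspan]⟩
  exact deltaQ_univ_le_of_radical_eq hS₀ G hG hrad

theorem stmt_2 (K : Type*) [Field K] (m : ℕ) (J : Ideal (MvPolynomial (Fin m) K))
    -- `J` is generated by binomials
    (S₀ : Set (MvPolynomial (Fin m) K)) (hS₀ : ∀ f ∈ S₀, IsBinomial f)
    (hJ : J = Ideal.span S₀)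
    -- `J` contains no binomial `x^u − 1` with `u ≠ 0`
    (hno : ∀ u : Fin m →₀ ℕ, u ≠ 0 → (monomial u (1 : K) - 1) ∉ J) :
    deltaQ J Set.univ ≤ araC J :=
  stmt_2_general K m J S₀ hS₀ hJ
end
end

section
/- Let G be a connected finite simple graph on the vertex set {1,…,n} with m edges. Then bar(J_G) = m, i.e., the binomial arithmetical rank of the binomial edge ideal J_G equals the number of edges of G. -/
open MvPolynomial

noncomputable section

/-- `f_{pq} = x_p · x_{n+q} − x_q · x_{n+p}` in `K[x_1,…,x_{2n}]`, where the first `n`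
variables are indexed by `Fin.castAdd n` and the last `n` variables by `Fin.natAdd n`. -/
def edgeBinomial (K : Type*) [Field K] (n : ℕ) (p q : Fin n) :
    MvPolynomial (Fin (n + n)) K :=
  X (Fin.castAdd n p) * X (Fin.natAdd n q) - X (Fin.castAdd n q) * X (Fin.natAdd n p)

/-- The binomial edge ideal `J_G` of a graph `G` on the vertex set `{1,…,n}`. -/
def binomialEdgeIdeal (K : Type*) [Field K] {n : ℕ} (G : SimpleGraph (Fin n)) :
    Ideal (MvPolynomial (Fin (n + n)) K) :=
  Ideal.span {f | ∃ p q : Fin n, p < q ∧ G.Adj p q ∧ f = edgeBinomial K n p q}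

/-- The arithmetical rank: the smallest `s` such that there are `s` polynomials in `I`
generating `I` up to radical. -/
def ara {K : Type*} [Field K] {m : ℕ} (I : Ideal (MvPolynomial (Fin m) K)) : ℕ :=
  sInf {s | ∃ F : Fin s → MvPolynomial (Fin m) K,
    (∀ i, F i ∈ I) ∧ (Ideal.span (Set.range F)).radical = I.radical}

/-!
The edge binomials themselves show `bar(J_G) ≤ m`. For the converse, let `ρ_S` kill the
variables of all vertices outside a vertex set `S`. It maps `J_G` into itself, and `J_G`
vanishes at the all-one point, so `ρ_S` sends a binomial of `J_G` to itself or to `0`, never to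
a lone monomial. If binomials `B_1, …, B_s` generate `J_G` up to radical, applying `ρ_{p,q}` to a
power of `f_{pq}` shows that some nonzero `B_t` involves only the variables of `p` and `q`. No
`B_t` serves two edges, since `ρ_{i}` kills `J_G` and so no nonzero binomial of `J_G` involves
the variables of a single vertex `i`. Hence `s ≥ m`.
-/

def varVertex (n : ℕ) : Fin (n + n) → Fin n :=
  Fin.addCases id id

@[simp] lemma varVertex_castAdd {n : ℕ} (p : Fin n) : varVertex n (Fin.castAdd n p) = p :=
  Fin.addCases_left p

@[simp] lemma varVertex_natAdd {n : ℕ} (p : Fin n) : varVertex n (Fin.natAdd n p) = p :=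
  Fin.addCases_right p

open scoped Classical in
def restrictVertices (K : Type*) [Field K] {n : ℕ} (S : Set (Fin n)) :
    MvPolynomial (Fin (n + n)) K →ₐ[K] MvPolynomial (Fin (n + n)) K :=
  aeval fun w => if varVertex n w ∈ S then X w else 0

section RestrictVertices

variable {K : Type*} [Field K] {n : ℕ}

lemma restrictVertices_X (S : Set (Fin n)) (w : Fin (n + n)) [Decidable (varVertex n w ∈ S)] :
    restrictVertices K S (X w) = if varVertex n w ∈ S then X w else 0 := by
  simp only [restrictVertices, aeval_X]
  congr

lemma restrictVertices_restrictVertices (S T : Set (Fin n))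
    (f : MvPolynomial (Fin (n + n)) K) :
    restrictVertices K S (restrictVertices K T f) = restrictVertices K (S ∩ T) f := by
  classical
  rw [← AlgHom.comp_apply]
  congr 1
  refine algHom_ext fun w => ?_
  simp only [AlgHom.comp_apply, restrictVertices_X, Set.mem_inter_iff]
  split_ifs <;> simp_all [restrictVertices_X]

lemma restrictVertices_monomial_eq_self_or_zero (S : Set (Fin n)) (u : Fin (n + n) →₀ ℕ)
    (r : K) :
    restrictVertices K S (monomial u r) = monomial u r ∨
      restrictVertices K S (monomial u r) = 0 := by
  classical
  by_cases h : ∀ w ∈ u.support, varVertex n w ∈ S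
  · left
    rw [restrictVertices, aeval_monomial, monomial_eq, algebraMap_eq]
    exact congrArg _ (Finsupp.prod_congr fun w hw => by rw [if_pos (h w hw)])
  · right
    push Not at h
    obtain ⟨w, hw, hwS⟩ := h
    rw [restrictVertices, aeval_monomial, Finsupp.prod,
      Finset.prod_eq_zero hw (by rw [if_neg hwS, zero_pow (Finsupp.mem_support_iff.mp hw)]),
      mul_zero]

lemma restrictVertices_edgeBinomial_of_mem {S : Set (Fin n)} {p q : Fin n} (hp : p ∈ S)
    (hq : q ∈ S) : restrictVertices K S (edgeBinomial K n p q) = edgeBinomial K n p q := by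
  classical
  simp only [edgeBinomial, map_sub, map_mul, restrictVertices_X, varVertex_castAdd,
    varVertex_natAdd, if_pos hp, if_pos hq]

lemma restrictVertices_edgeBinomial_of_not_mem {S : Set (Fin n)} {p q : Fin n}
    (h : p ∉ S ∨ q ∉ S) : restrictVertices K S (edgeBinomial K n p q) = 0 := by
  classical
  rcases h with h | h <;>
  simp only [edgeBinomial, map_sub, map_mul, restrictVertices_X, varVertex_castAdd,
    varVertex_natAdd, if_neg h, mul_zero, zero_mul, sub_zero]

end RestrictVertices

section BinomialEdgeIdeal

variable {K : Type*} [Field K] {n : ℕ} {G : SimpleGraph (Fin n)}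

lemma edgeBinomial_swap (p q : Fin n) : edgeBinomial K n q p = -edgeBinomial K n p q := by
  simp only [edgeBinomial, neg_sub]

lemma edgeBinomial_mem_binomialEdgeIdeal {p q : Fin n} (h : G.Adj p q) :
    edgeBinomial K n p q ∈ binomialEdgeIdeal K G := by
  rcases h.ne.lt_or_gt with hpq | hqp
  · exact Ideal.subset_span ⟨p, q, hpq, h, rfl⟩
  · rw [← neg_neg (edgeBinomial K n p q), ← edgeBinomial_swap]
    exact neg_mem (Ideal.subset_span ⟨q, p, hqp, h.symm, rfl⟩)

lemma edgeBinomial_ne_zero {p q : Fin n} (h : p ≠ q) : edgeBinomial K n p q ≠ 0 := by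
  intro h0
  have := congrArg (eval (Fin.addCases (fun i => if i = p then (1 : K) else 0)
    fun i => if i = q then 1 else 0)) h0
  simp only [edgeBinomial, map_sub, map_mul, eval_X, Fin.addCases_left, Fin.addCases_right,
    if_neg h, if_neg h.symm, mul_zero, sub_zero, map_zero, if_true, mul_one] at this
  exact one_ne_zero this

lemma binomialEdgeIdeal_le_comap_restrictVertices (S : Set (Fin n)) :
    binomialEdgeIdeal K G ≤ (binomialEdgeIdeal K G).comap (restrictVertices K S) := by
  rw [binomialEdgeIdeal, Ideal.span_le]
  rintro _ ⟨p, q, hpq, hadj, rfl⟩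
  by_cases h : p ∈ S ∧ q ∈ S
  · rw [SetLike.mem_coe, Ideal.mem_comap, restrictVertices_edgeBinomial_of_mem h.1 h.2]
    exact Ideal.subset_span ⟨p, q, hpq, hadj, rfl⟩
  · rw [SetLike.mem_coe, Ideal.mem_comap,
      restrictVertices_edgeBinomial_of_not_mem (not_and_or.mp h)]
    exact zero_mem _

lemma binomialEdgeIdeal_le_ker_restrictVertices {S : Set (Fin n)} (hS : G.IsIndepSet S) :
    binomialEdgeIdeal K G ≤ RingHom.ker (restrictVertices K S) := by
  rw [binomialEdgeIdeal, Ideal.span_le]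
  rintro _ ⟨p, q, hpq, hadj, rfl⟩
  refine restrictVertices_edgeBinomial_of_not_mem (not_and_or.mp fun h => ?_)
  exact hS h.1 h.2 hpq.ne hadj

lemma binomialEdgeIdeal_le_ker_aeval_one :
    binomialEdgeIdeal K G ≤ RingHom.ker (aeval (1 : Fin (n + n) → K)) := by
  rw [binomialEdgeIdeal, Ideal.span_le]
  rintro _ ⟨p, q, -, -, rfl⟩
  simp [edgeBinomial]

lemma restrictVertices_eq_self_or_zero_of_mem {b : MvPolynomial (Fin (n + n)) K}
    (hb : IsBinomial b) (hbJ : b ∈ binomialEdgeIdeal K G) (S : Set (Fin n)) :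
    restrictVertices K S b = b ∨ restrictVertices K S b = 0 := by
  obtain ⟨u, v, rfl⟩ := hb
  have hone :
      aeval (1 : Fin (n + n) → K) (restrictVertices K S (monomial u 1 - monomial v 1)) = 0 :=
    binomialEdgeIdeal_le_ker_aeval_one (binomialEdgeIdeal_le_comap_restrictVertices S hbJ)
  rw [map_sub] at hone ⊢
  -- the mixed cases leave a lone monomial, which does not vanish at the all-one point
  rcases restrictVertices_monomial_eq_self_or_zero S u (1 : K) with hu | hu <;>
  rcases restrictVertices_monomial_eq_self_or_zero S v (1 : K) with hv | hv <;>
  simp_all [eval_monomial]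

end BinomialEdgeIdeal

lemma Sym2.subsingleton_inter_of_ne {α : Type*} {e e' : Sym2 α} (h : e ≠ e') :
    ({x | x ∈ e} ∩ {x | x ∈ e'}).Subsingleton := by
  rintro x ⟨hx, hx'⟩ y ⟨hy, hy'⟩
  by_contra hxy
  exact h (((Sym2.mem_and_mem_iff hxy).mp ⟨hx, hy⟩).trans
    ((Sym2.mem_and_mem_iff hxy).mp ⟨hx', hy'⟩).symm)

section LowerBound

variable {K : Type*} [Field K] {n : ℕ} {G : SimpleGraph (Fin n)} {s : ℕ}
  {B : Fin s → MvPolynomial (Fin (n + n)) K}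

lemma exists_restrictVertices_edge_eq_self (hbin : ∀ t, IsBinomial (B t))
    (hmem : ∀ t, B t ∈ binomialEdgeIdeal K G)
    (hrad : (Ideal.span (Set.range B)).radical = (binomialEdgeIdeal K G).radical)
    {e : Sym2 (Fin n)} (he : e ∈ G.edgeSet) :
    ∃ t, B t ≠ 0 ∧ restrictVertices K {x | x ∈ e} (B t) = B t := by
  induction e using Sym2.ind with
  | _ p q =>
  have hadj : G.Adj p q := he
  by_contra! hnone
  have hkill :
      Ideal.span (Set.range B) ≤ RingHom.ker (restrictVertices K {x | x ∈ s(p, q)}) := by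
    rw [Ideal.span_le]
    rintro _ ⟨t, rfl⟩
    by_cases hB : B t = 0
    · simp [hB]
    · exact ((restrictVertices_eq_self_or_zero_of_mem (hbin t) (hmem t) _).resolve_left
        (hnone t hB))
  have hrad_f : edgeBinomial K n p q ∈ (Ideal.span (Set.range B)).radical :=
    hrad ▸ Ideal.le_radical (edgeBinomial_mem_binomialEdgeIdeal hadj)
  obtain ⟨N, hN⟩ := hrad_f
  have := hkill hN
  rw [RingHom.mem_ker, map_pow, restrictVertices_edgeBinomial_of_mem (by simp) (by simp)] at this
  exact pow_ne_zero N (edgeBinomial_ne_zero hadj.ne) this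

lemma card_edgeFinset_le [DecidableRel G.Adj] (hbin : ∀ t, IsBinomial (B t))
    (hmem : ∀ t, B t ∈ binomialEdgeIdeal K G)
    (hrad : (Ideal.span (Set.range B)).radical = (binomialEdgeIdeal K G).radical) :
    G.edgeFinset.card ≤ s := by
  choose t hBt hfix using fun e : G.edgeSet =>
    exists_restrictVertices_edge_eq_self hbin hmem hrad e.2
  rw [SimpleGraph.edgeFinset_card, ← Fintype.card_fin s]
  refine Fintype.card_le_of_injective t fun e e' hee' => Subtype.ext ?_
  by_contra hne
  have hfix' : restrictVertices K ({x | x ∈ e.1} ∩ {x | x ∈ e'.1}) (B (t e)) = B (t e) := by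
    rw [← restrictVertices_restrictVertices, hee', hfix, ← hee', hfix]
  have hindep : G.IsIndepSet ({x | x ∈ e.1} ∩ {x | x ∈ e'.1}) :=
    (Sym2.subsingleton_inter_of_ne hne).pairwise _
  exact hBt e (hfix' ▸ binomialEdgeIdeal_le_ker_restrictVertices hindep (hmem (t e)))

end LowerBound

def sym2EdgeBinomial (K : Type*) [Field K] (n : ℕ) :
    Sym2 (Fin n) → MvPolynomial (Fin (n + n)) K :=
  Sym2.lift ⟨fun p q => edgeBinomial K n (min p q) (max p q), fun p q => by
    simp only [min_comm, max_comm]⟩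

section UpperBound

variable {K : Type*} [Field K] {n : ℕ}

lemma isBinomial_edgeBinomial (p q : Fin n) : IsBinomial (edgeBinomial K n p q) :=
  ⟨Finsupp.single (Fin.castAdd n p) 1 + Finsupp.single (Fin.natAdd n q) 1,
    Finsupp.single (Fin.castAdd n q) 1 + Finsupp.single (Fin.natAdd n p) 1,
    by simp only [edgeBinomial, X, monomial_mul, one_mul]⟩

@[simp] lemma sym2EdgeBinomial_mk (p q : Fin n) :
    sym2EdgeBinomial K n s(p, q) = edgeBinomial K n (min p q) (max p q) :=
  rfl

lemma isBinomial_sym2EdgeBinomial (e : Sym2 (Fin n)) : IsBinomial (sym2EdgeBinomial K n e) := by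
  induction e using Sym2.ind with
  | _ p q => exact isBinomial_edgeBinomial _ _

lemma range_sym2EdgeBinomial (G : SimpleGraph (Fin n)) :
    Set.range (fun e : G.edgeSet => sym2EdgeBinomial K n e) =
      {f | ∃ p q : Fin n, p < q ∧ G.Adj p q ∧ f = edgeBinomial K n p q} := by
  ext f
  constructor
  · rintro ⟨⟨e, he⟩, rfl⟩
    induction e using Sym2.ind with
    | _ p q =>
    have hadj : G.Adj p q := he
    rcases hadj.ne.lt_or_gt with h | h
    · exact ⟨p, q, h, hadj, by simp [h.le]⟩
    · exact ⟨q, p, h, hadj.symm, by simp [h.le]⟩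
  · rintro ⟨p, q, hpq, hadj, rfl⟩
    exact ⟨⟨s(p, q), hadj⟩, by simp [hpq.le]⟩

lemma exists_isBinomial_span_eq_binomialEdgeIdeal (G : SimpleGraph (Fin n))
    [DecidableRel G.Adj] :
    ∃ B : Fin G.edgeFinset.card → MvPolynomial (Fin (n + n)) K,
      (∀ i, IsBinomial (B i)) ∧ Ideal.span (Set.range B) = binomialEdgeIdeal K G := by
  let σ := Fintype.equivFinOfCardEq G.edgeFinset_card.symm
  refine ⟨fun i => sym2EdgeBinomial K n (σ.symm i), fun i => isBinomial_sym2EdgeBinomial _, ?_⟩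
  rw [binomialEdgeIdeal, ← range_sym2EdgeBinomial]
  exact congrArg Ideal.span
    (EquivLike.range_comp (fun e : G.edgeSet => sym2EdgeBinomial K n e) σ.symm)

end UpperBound

theorem stmt_4_general (K : Type*) [Field K] (n : ℕ)
    (G : SimpleGraph (Fin n)) [DecidableRel G.Adj]
    (m : ℕ) (hm : G.edgeFinset.card = m) :
    bar (binomialEdgeIdeal K G) = m := by
  subst hm
  obtain ⟨B, hbin, hspan⟩ := exists_isBinomial_span_eq_binomialEdgeIdeal (K := K) G
  have hB : G.edgeFinset.card ∈ {s | ∃ B : Fin s → MvPolynomial (Fin (n + n)) K,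
      (∀ i, IsBinomial (B i)) ∧ (∀ i, B i ∈ binomialEdgeIdeal K G) ∧
      (Ideal.span (Set.range B)).radical = (binomialEdgeIdeal K G).radical} :=
    ⟨B, hbin, fun i => hspan ▸ Ideal.subset_span ⟨i, rfl⟩, by rw [hspan]⟩
  refine le_antisymm (Nat.sInf_le hB) (le_csInf ⟨_, hB⟩ ?_)
  rintro s ⟨B', hbin', hmem', hrad'⟩
  exact card_edgeFinset_le hbin' hmem' hrad'

theorem stmt_4 (K : Type*) [Field K] (n : ℕ) (hn : 0 < n)
    (G : SimpleGraph (Fin n)) [DecidableRel G.Adj] (hconn : G.Connected)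
    (m : ℕ) (hm : G.edgeFinset.card = m) :
    bar (binomialEdgeIdeal K G) = m :=
  stmt_4_general K n G m hm
end
end

section
/- Let G be a connected finite simple graph on the vertex set {1,…,n} with m edges. Then ara_c(J_G) = m, i.e., the J_G-complete arithmetical rank of the binomial edge ideal J_G equals the number of edges of G. -/
/-!
The `m` edge binomials generate `J_G` and are `J_G`-complete, which gives `ara_c(J_G) ≤ m`.

Conversely, let `F_1, …, F_s` be `J_G`-complete with `rad (F_1, …, F_s) = rad J_G`. A binomial
`X^u - X^v` lies in `J_G` only if `u` and `v` are linked by exchanges `x_p y_q ↔ x_q y_p` along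
edges, and these exchanges preserve every vertex degree `u(x_r) + u(y_r)` as well as the total
`x`-degree. For an edge `p < q`, some power `f_{pq}^k` lies in `(F_1, …, F_s)`; working modulo
`y_p`, this forces a monomial `x_p^a y_q^b` into the support of some `F_j`. By completeness all
monomials of `F_j` are then linked to `x_p^a y_q^b`, and the invariants give `a, b > 0` (otherwise
`F_j` would be a monomial, and `J_G` contains none) and determine `{p, q}` from `F_j`. So the edges
inject into `{1, …, s}`.
-/

open MvPolynomial

noncomputable section

namespace MvPolynomial

variable {σ R : Type*} [CommRing R]

variable (R) in
def binomialIdeal (r : (σ →₀ ℕ) → (σ →₀ ℕ) → Prop) : Ideal (MvPolynomial σ R) :=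
  Ideal.span {f | ∃ a b, r a b ∧ f = monomial a 1 - monomial b 1}

variable (R) in
def binomialQuotientHom (r : (σ →₀ ℕ) → (σ →₀ ℕ) → Prop) :
    MvPolynomial σ R →+* AddMonoidAlgebra R (addConGen r).Quotient :=
  AddMonoidAlgebra.mapDomainRingHom R (addConGen r).mk'

variable {r : (σ →₀ ℕ) → (σ →₀ ℕ) → Prop}

theorem binomialQuotientHom_monomial (u : σ →₀ ℕ) (c : R) :
    binomialQuotientHom R r (monomial u c) =
      AddMonoidAlgebra.single (u : (addConGen r).Quotient) c := by
  rw [← single_eq_monomial]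
  exact AddMonoidAlgebra.mapDomain_single

theorem binomialIdeal_le_ker : binomialIdeal R r ≤ RingHom.ker (binomialQuotientHom R r) := by
  refine Ideal.span_le.mpr ?_
  rintro _ ⟨a, b, hab, rfl⟩
  rw [SetLike.mem_coe, RingHom.mem_ker, map_sub, binomialQuotientHom_monomial,
    binomialQuotientHom_monomial, (AddCon.eq _).mpr (AddConGen.Rel.of a b hab), sub_self]

theorem addConGen_of_monomial_sub_mem_binomialIdeal [Nontrivial R] {u v : σ →₀ ℕ}
    (h : monomial u (1 : R) - monomial v 1 ∈ binomialIdeal R r) : addConGen r u v := by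
  have := binomialIdeal_le_ker h
  rw [RingHom.mem_ker, map_sub, binomialQuotientHom_monomial, binomialQuotientHom_monomial,
    sub_eq_zero, AddMonoidAlgebra.single_left_inj one_ne_zero] at this
  exact (AddCon.eq _).mp this

theorem monomial_notMem_binomialIdeal {u : σ →₀ ℕ} {c : R} (hc : c ≠ 0) :
    monomial u c ∉ binomialIdeal R r := fun h => by
  have := binomialIdeal_le_ker h
  rw [RingHom.mem_ker, binomialQuotientHom_monomial, AddMonoidAlgebra.single_eq_zero] at this
  exact hc this

/-- Modulo the monomial ideal generated by `x_i` and the monomials of all `F j`, we have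
`X^a - X^b ≡ X^a`, so `X^(k • a)` lies in that monomial ideal. -/
theorem exists_mem_support_le_of_pow_mem [Nontrivial R] {ι : Type*} {F : ι → MvPolynomial σ R}
    {a b : σ →₀ ℕ} {i : σ} {k : ℕ}
    (hk : (monomial a (1 : R) - monomial b 1) ^ k ∈ Ideal.span (Set.range F))
    (ha : a i = 0) (hb : b i ≠ 0) :
    ∃ j, ∃ s ∈ (F j).support, s ≤ k • a := by
  classical
  set T : Set (σ →₀ ℕ) := insert (Finsupp.single i 1) (⋃ j, ((F j).support : Set (σ →₀ ℕ)))
  set M : Ideal (MvPolynomial σ R) := Ideal.span ((fun s => monomial s 1) '' T)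
  have hFM : Ideal.span (Set.range F) ≤ M := by
    refine Ideal.span_le.mpr ?_
    rintro _ ⟨j, rfl⟩
    exact mem_ideal_span_monomial_image.mpr fun s hs =>
      ⟨s, Or.inr (Set.mem_iUnion.mpr ⟨j, hs⟩), le_rfl⟩
  have hbM : monomial b (1 : R) ∈ M := by
    refine mem_ideal_span_monomial_image.mpr fun s hs => ⟨_, Or.inl rfl, ?_⟩
    rw [Finset.mem_singleton.mp (support_monomial_subset hs)]
    exact Finsupp.single_le_iff.mpr (Nat.one_le_iff_ne_zero.mpr hb)
  have haM : monomial (k • a) (1 : R) ∈ M := by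
    rw [← one_pow k, ← monomial_pow, ← Ideal.Quotient.eq_zero_iff_mem,
      ← sub_add_cancel (monomial a (1 : R)) (monomial b 1), map_pow, map_add,
      Ideal.Quotient.eq_zero_iff_mem.mpr hbM, add_zero, ← map_pow]
    exact Ideal.Quotient.eq_zero_iff_mem.mpr (hFM hk)
  obtain ⟨s, hsT, hsa⟩ := mem_ideal_span_monomial_image.mp haM (k • a) (by simp)
  rcases hsT with rfl | hs
  · have := Finsupp.single_le_iff.mp hsa
    simp [ha] at this
  · obtain ⟨j, hj⟩ := Set.mem_iUnion.mp hs
    exact ⟨j, s, hj, hsa⟩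

end MvPolynomial

theorem isCompletePolynomial_monomial_sub_monomial {K : Type*} [Field K] {m : ℕ}
    {I : Ideal (MvPolynomial (Fin m) K)} {a b : Fin m →₀ ℕ}
    (h : monomial a (1 : K) - monomial b 1 ∈ I) :
    IsCompletePolynomial I (monomial a 1 - monomial b 1) := by
  classical
  have hsupp : ∀ u ∈ (monomial a (1 : K) - monomial b 1).support, u = a ∨ u = b := fun u hu => by
    simpa using (support_sub _ _ _).trans
      (Finset.union_subset_union support_monomial_subset support_monomial_subset) hu
  intro u hu v hv
  rcases hsupp u hu with rfl | rfl <;> rcases hsupp v hv with rfl | rfl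
  · simp
  · exact h
  · rw [← neg_sub]
    exact I.neg_mem h
  · simp

theorem AddCon.map_eq_of_addConGen {M N : Type*} [AddZeroClass M] [AddZeroClass N]
    {r : M → M → Prop} (f : M →+ N) (hf : ∀ a b, r a b → f a = f b) {u v : M}
    (h : addConGen r u v) : f u = f v :=
  (AddCon.ker_rel f).mp <|
    AddCon.addConGen_le.mpr (fun a b hab => (AddCon.ker_rel f).mpr (hf a b hab)) h

theorem SimpleGraph.inf_lt_sup_of_mem_edgeSet {V : Type*} [LinearOrder V] {G : SimpleGraph V}
    {e : Sym2 V} (he : e ∈ G.edgeSet) : e.inf < e.sup := by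
  induction e using Sym2.ind with
  | _ a b => simpa [eq_comm] using G.ne_of_adj he

theorem SimpleGraph.adj_inf_sup_of_mem_edgeSet {V : Type*} [LinearOrder V] {G : SimpleGraph V}
    {e : Sym2 V} (he : e ∈ G.edgeSet) : G.Adj e.inf e.sup := by
  induction e using Sym2.ind with
  | _ a b =>
    rcases le_total a b with h | h
    · simpa [h] using he
    · simpa [h] using he.symm

namespace BinomialEdgeIdeal

open SimpleGraph

variable {n : ℕ}

def xVar (p : Fin n) : Fin (n + n) := Fin.castAdd n p

def yVar (p : Fin n) : Fin (n + n) := Fin.natAdd n p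

@[simp]
theorem xVar_inj {p q : Fin n} : xVar p = xVar q ↔ p = q := Fin.castAdd_inj

@[simp]
theorem yVar_inj {p q : Fin n} : yVar p = yVar q ↔ p = q := Fin.natAdd_inj n

@[simp]
theorem xVar_ne_yVar (p q : Fin n) : xVar p ≠ yVar q := by
  simp only [xVar, yVar, ne_eq, Fin.ext_iff, Fin.val_castAdd, Fin.val_natAdd]
  omega

theorem ext_xVar_yVar {u v : Fin (n + n) →₀ ℕ}
    (hx : ∀ r, u (xVar r) = v (xVar r)) (hy : ∀ r, u (yVar r) = v (yVar r)) : u = v := by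
  ext i
  induction i using Fin.addCases with
  | left r => exact hx r
  | right r => exact hy r

/-- The exponent of `x_p ^ a * y_q ^ b`. -/
def xyExp (p q : Fin n) (a b : ℕ) : Fin (n + n) →₀ ℕ :=
  Finsupp.single (xVar p) a + Finsupp.single (yVar q) b

@[simp]
theorem xyExp_xVar (p q r : Fin n) (a b : ℕ) :
    xyExp p q a b (xVar r) = if p = r then a else 0 := by
  simp [xyExp, Finsupp.single_apply]

@[simp]
theorem xyExp_yVar (p q r : Fin n) (a b : ℕ) :
    xyExp p q a b (yVar r) = if q = r then b else 0 := by
  simp [xyExp, Finsupp.single_apply]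

theorem eq_xyExp_of_le {p q : Fin n} {a b : ℕ} {s : Fin (n + n) →₀ ℕ} (h : s ≤ xyExp p q a b) :
    s = xyExp p q (s (xVar p)) (s (yVar q)) := by
  refine ext_xVar_yVar (fun r => ?_) (fun r => ?_)
  · have := h (xVar r)
    by_cases hr : p = r <;> simp_all
  · have := h (yVar r)
    by_cases hr : q = r <;> simp_all

theorem edgeBinomial_eq (K : Type*) [Field K] (p q : Fin n) :
    edgeBinomial K n p q = monomial (xyExp p q 1 1) 1 - monomial (xyExp q p 1 1) 1 := by
  simp only [edgeBinomial, xyExp, X, monomial_mul, one_mul]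
  rfl

/-- The exchange `x_p y_q ↔ x_q y_p` along an edge `{p, q}` of `G`. -/
def EdgeMove (G : SimpleGraph (Fin n)) (a b : Fin (n + n) →₀ ℕ) : Prop :=
  ∃ p q, p < q ∧ G.Adj p q ∧ a = xyExp p q 1 1 ∧ b = xyExp q p 1 1

theorem binomialEdgeIdeal_eq_binomialIdeal (K : Type*) [Field K] (G : SimpleGraph (Fin n)) :
    binomialEdgeIdeal K G = binomialIdeal K (EdgeMove G) := by
  unfold binomialEdgeIdeal binomialIdeal EdgeMove
  congr 1
  ext f
  simp only [Set.mem_ofPred_eq, edgeBinomial_eq]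
  constructor
  · rintro ⟨p, q, hpq, hadj, rfl⟩
    exact ⟨_, _, ⟨p, q, hpq, hadj, rfl, rfl⟩, rfl⟩
  · rintro ⟨_, _, ⟨p, q, hpq, hadj, rfl, rfl⟩, rfl⟩
    exact ⟨p, q, hpq, hadj, rfl⟩

def vertexDegree (r : Fin n) : (Fin (n + n) →₀ ℕ) →+ ℕ :=
  Finsupp.applyAddHom (xVar r) + Finsupp.applyAddHom (yVar r)

def xDegree : (Fin (n + n) →₀ ℕ) →+ ℕ :=
  ∑ r, Finsupp.applyAddHom (xVar r)

variable {K : Type*} [Field K] {G : SimpleGraph (Fin n)}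

theorem EdgeMove.vertexDegree_eq {a b : Fin (n + n) →₀ ℕ} (h : EdgeMove G a b) (r : Fin n) :
    vertexDegree r a = vertexDegree r b := by
  obtain ⟨p, q, -, -, rfl, rfl⟩ := h
  simp [vertexDegree, add_comm]

theorem EdgeMove.xDegree_eq {a b : Fin (n + n) →₀ ℕ} (h : EdgeMove G a b) :
    xDegree a = xDegree b := by
  obtain ⟨p, q, -, -, rfl, rfl⟩ := h
  simp [xDegree]

theorem vertexDegree_eq_of_addConGen {u v : Fin (n + n) →₀ ℕ} (h : addConGen (EdgeMove G) u v)
    (r : Fin n) : u (xVar r) + u (yVar r) = v (xVar r) + v (yVar r) :=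
  AddCon.map_eq_of_addConGen (vertexDegree r) (fun _ _ hab => hab.vertexDegree_eq r) h

theorem xDegree_eq_of_addConGen {u v : Fin (n + n) →₀ ℕ} (h : addConGen (EdgeMove G) u v) :
    ∑ r, u (xVar r) = ∑ r, v (xVar r) := by
  simpa [xDegree] using AddCon.map_eq_of_addConGen xDegree (fun _ _ hab => hab.xDegree_eq) h

theorem apply_eq_zero_of_addConGen_xyExp {u : Fin (n + n) →₀ ℕ} {p q r : Fin n} {a b : ℕ}
    (h : addConGen (EdgeMove G) u (xyExp p q a b)) (hp : p ≠ r) (hq : q ≠ r) :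
    u (xVar r) = 0 ∧ u (yVar r) = 0 := by
  have := vertexDegree_eq_of_addConGen h r
  simp only [xyExp_xVar, xyExp_yVar, hp, hq, if_false] at this
  omega

theorem eq_xyExp_of_addConGen {u : Fin (n + n) →₀ ℕ} {p q : Fin n} {a b : ℕ} (hpq : p ≠ q)
    (hab : a = 0 ∨ b = 0) (h : addConGen (EdgeMove G) u (xyExp p q a b)) :
    u = xyExp p q a b := by
  have hp := vertexDegree_eq_of_addConGen h p
  have hq := vertexDegree_eq_of_addConGen h q
  have hx : u (xVar p) + u (xVar q) = a := by
    rw [← Fintype.sum_eq_add p q hpq fun r hr =>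
      (apply_eq_zero_of_addConGen_xyExp h (Ne.symm hr.1) (Ne.symm hr.2)).1,
      xDegree_eq_of_addConGen h]
    simp
  simp only [xyExp_xVar, xyExp_yVar, hpq, Ne.symm hpq, if_true, if_false] at hp hq
  refine ext_xVar_yVar (fun r => ?_) (fun r => ?_)
  · by_cases hpr : p = r
    · subst hpr; simp only [xyExp_xVar, ↓reduceIte]; omega
    by_cases hqr : q = r
    · subst hqr; simp only [xyExp_xVar, if_neg hpq]; omega
    simp [hpr, (apply_eq_zero_of_addConGen_xyExp h hpr hqr).1]
  · by_cases hpr : p = r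
    · subst hpr; simp only [xyExp_yVar, if_neg hpq.symm]; omega
    by_cases hqr : q = r
    · subst hqr; simp only [xyExp_yVar, ↓reduceIte]; omega
    simp [hqr, (apply_eq_zero_of_addConGen_xyExp h hpr hqr).2]

theorem pos_of_xyExp_mem_support {F : MvPolynomial (Fin (n + n)) K} {p q : Fin n} {a b : ℕ}
    (hpq : p ≠ q) (hF : F ∈ binomialEdgeIdeal K G)
    (hcomp : IsCompletePolynomial (binomialEdgeIdeal K G) F) (h : xyExp p q a b ∈ F.support) :
    0 < a ∧ 0 < b := by
  rw [binomialEdgeIdeal_eq_binomialIdeal] at hF hcomp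
  by_contra hab
  have hsupp : ∀ u ∈ F.support, u = xyExp p q a b := fun u hu =>
    eq_xyExp_of_addConGen hpq (by omega)
      (addConGen_of_monomial_sub_mem_binomialIdeal (hcomp u hu _ h))
  rw [eq_monomial_of_support_subset_singleton hsupp] at hF
  exact monomial_notMem_binomialIdeal (mem_support_iff.mp h) hF

theorem eq_of_xyExp_mem_support {F : MvPolynomial (Fin (n + n)) K}
    (hcomp : IsCompletePolynomial (binomialEdgeIdeal K G) F) {p q p' q' : Fin n} {a b a' b' : ℕ}
    (hpq : p < q) (hpq' : p' < q') (ha' : 0 < a') (hb' : 0 < b')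
    (h : xyExp p q a b ∈ F.support) (h' : xyExp p' q' a' b' ∈ F.support) : p = p' ∧ q = q' := by
  rw [binomialEdgeIdeal_eq_binomialIdeal] at hcomp
  have hrel := addConGen_of_monomial_sub_mem_binomialIdeal (hcomp _ h' _ h)
  have hp' : p = p' ∨ q = p' := by
    by_contra! hne
    have := (apply_eq_zero_of_addConGen_xyExp hrel hne.1 hne.2).1
    simp only [xyExp_xVar, ↓reduceIte] at this
    omega
  have hq' : p = q' ∨ q = q' := by
    by_contra! hne
    have := (apply_eq_zero_of_addConGen_xyExp hrel hne.1 hne.2).2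
    simp only [xyExp_yVar, ↓reduceIte] at this
    omega
  omega

theorem exists_xyExp_mem_support {ι : Type*} {F : ι → MvPolynomial (Fin (n + n)) K}
    (hF : ∀ i, F i ∈ binomialEdgeIdeal K G ∧ IsCompletePolynomial (binomialEdgeIdeal K G) (F i))
    (hrad : (Ideal.span (Set.range F)).radical = (binomialEdgeIdeal K G).radical)
    {p q : Fin n} (hpq : p < q) (hadj : G.Adj p q) :
    ∃ j a b, 0 < a ∧ 0 < b ∧ xyExp p q a b ∈ (F j).support := by
  have hmem : edgeBinomial K n p q ∈ (Ideal.span (Set.range F)).radical :=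
    hrad ▸ Ideal.le_radical (Ideal.subset_span ⟨p, q, hpq, hadj, rfl⟩)
  obtain ⟨k, hk⟩ := hmem
  rw [edgeBinomial_eq] at hk
  obtain ⟨j, u, hu, hle⟩ :=
    exists_mem_support_le_of_pow_mem hk (i := yVar p) (by simp [hpq.ne']) (by simp)
  have hpow : k • xyExp p q 1 1 = xyExp p q k k := by simp [xyExp]
  rw [hpow] at hle
  rw [eq_xyExp_of_le hle] at hu
  obtain ⟨ha, hb⟩ := pos_of_xyExp_mem_support hpq.ne (hF j).1 (hF j).2 hu
  exact ⟨j, _, _, ha, hb, hu⟩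

theorem binomialEdgeIdeal_eq_span_edgeSet :
    binomialEdgeIdeal K G =
      Ideal.span (Set.range fun e : G.edgeSet => edgeBinomial K n e.1.inf e.1.sup) := by
  unfold binomialEdgeIdeal
  congr 1
  ext f
  constructor
  · rintro ⟨p, q, hpq, hadj, rfl⟩
    exact ⟨⟨s(p, q), hadj⟩, by simp [hpq.le]⟩
  · rintro ⟨e, rfl⟩
    exact ⟨_, _, inf_lt_sup_of_mem_edgeSet e.2, adj_inf_sup_of_mem_edgeSet e.2, rfl⟩

variable (K G) in
theorem exists_complete_generators [Fintype G.edgeSet] :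
    ∃ F : Fin (Fintype.card G.edgeSet) → MvPolynomial (Fin (n + n)) K,
      (∀ i, F i ∈ binomialEdgeIdeal K G ∧ IsCompletePolynomial (binomialEdgeIdeal K G) (F i)) ∧
      (Ideal.span (Set.range F)).radical = (binomialEdgeIdeal K G).radical := by
  let e := (Fintype.equivFin G.edgeSet).symm
  refine ⟨fun i => edgeBinomial K n (e i).1.inf (e i).1.sup, fun i => ?_, ?_⟩
  · have hmem : edgeBinomial K n (e i).1.inf (e i).1.sup ∈ binomialEdgeIdeal K G :=
      Ideal.subset_span ⟨_, _, inf_lt_sup_of_mem_edgeSet (e i).2,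
        adj_inf_sup_of_mem_edgeSet (e i).2, rfl⟩
    refine ⟨hmem, ?_⟩
    simp only [edgeBinomial_eq] at hmem ⊢
    exact isCompletePolynomial_monomial_sub_monomial hmem
  · rw [binomialEdgeIdeal_eq_span_edgeSet, ← e.surjective.range_comp]
    rfl

theorem card_edgeSet_le [Fintype G.edgeSet] {s : ℕ} {F : Fin s → MvPolynomial (Fin (n + n)) K}
    (hF : ∀ i, F i ∈ binomialEdgeIdeal K G ∧ IsCompletePolynomial (binomialEdgeIdeal K G) (F i))
    (hrad : (Ideal.span (Set.range F)).radical = (binomialEdgeIdeal K G).radical) :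
    Fintype.card G.edgeSet ≤ s := by
  choose f a b ha hb hf using fun e : G.edgeSet =>
    exists_xyExp_mem_support hF hrad (inf_lt_sup_of_mem_edgeSet e.2)
      (adj_inf_sup_of_mem_edgeSet e.2)
  refine (Fintype.card_le_of_injective f fun e e' he => ?_).trans_eq (Fintype.card_fin s)
  have he' := hf e
  rw [he] at he'
  exact Subtype.ext <| Sym2.inf_eq_inf_and_sup_eq_sup.mp <|
    eq_of_xyExp_mem_support (hF (f e')).2 (inf_lt_sup_of_mem_edgeSet e.2)
      (inf_lt_sup_of_mem_edgeSet e'.2) (ha e') (hb e') he' (hf e')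

end BinomialEdgeIdeal

theorem stmt_5_general (K : Type*) [Field K] (n : ℕ)
    (G : SimpleGraph (Fin n)) [DecidableRel G.Adj]
    (m : ℕ) (hm : G.edgeFinset.card = m) :
    araC (binomialEdgeIdeal K G) = m := by
  rw [← hm, SimpleGraph.edgeFinset_card]
  have hgen := BinomialEdgeIdeal.exists_complete_generators K G
  exact le_antisymm (Nat.sInf_le hgen) <| le_csInf ⟨_, hgen⟩ fun _ ⟨_, hF, hrad⟩ =>
    BinomialEdgeIdeal.card_edgeSet_le hF hrad

theorem stmt_5 (K : Type*) [Field K] (n : ℕ) (hn : 0 < n)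
    (G : SimpleGraph (Fin n)) [DecidableRel G.Adj] (hconn : G.Connected)
    (m : ℕ) (hm : G.edgeFinset.card = m) :
    araC (binomialEdgeIdeal K G) = m :=
  stmt_5_general K n G m hm
end
end

section
/- Let G be a connected finite simple graph on the vertex set {1,…,n} with m edges. Then ara_B(J_G) = m, where ara_B(J_G) is the smallest integer s for which there exist B-homogeneous polynomials F_1,…,F_s ∈ J_G with rad(J_G) = rad((F_1,…,F_s)). -/
open MvPolynomial

noncomputable section

/-- The `B`-degree of an exponent vector `u ∈ ℕ^{2n}`:
`deg_B(x^u) = (u_1 + ⋯ + u_n, u_1 + u_{n+1}, …, u_n + u_{2n}) ∈ ℕ^{n+1}`. -/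
def degB (n : ℕ) (u : Fin (n + n) →₀ ℕ) : ℕ × (Fin n → ℕ) :=
  (∑ i : Fin n, u (Fin.castAdd n i), fun i => u (Fin.castAdd n i) + u (Fin.natAdd n i))

/-- A polynomial is `B`-homogeneous if all monomials occurring in it with nonzero
coefficient have the same `B`-degree. -/
def IsBHomogeneous {K : Type*} [Field K] {n : ℕ} (F : MvPolynomial (Fin (n + n)) K) : Prop :=
  ∀ u ∈ F.support, ∀ v ∈ F.support, degB n u = degB n v

/-- The `B`-homogeneous arithmetical rank. -/
def araB {K : Type*} [Field K] {n : ℕ} (I : Ideal (MvPolynomial (Fin (n + n)) K)) : ℕ :=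
  sInf {s | ∃ F : Fin s → MvPolynomial (Fin (n + n)) K,
    (∀ i, F i ∈ I ∧ IsBHomogeneous (F i)) ∧
    (Ideal.span (Set.range F)).radical = I.radical}

namespace BEI

open scoped Classical

variable {K : Type*} [Field K] {n : ℕ}

lemma castAdd_ne_natAdd (p q : Fin n) : Fin.castAdd n p ≠ Fin.natAdd n q := by
  intro h
  have h2 := congrArg Fin.val h
  have hp := p.isLt
  simp at h2
  omega

lemma natAdd_ne_castAdd (p q : Fin n) : Fin.natAdd n p ≠ Fin.castAdd n q :=
  (castAdd_ne_natAdd q p).symm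

lemma natAdd_inj {a b : Fin n} : Fin.natAdd n a = Fin.natAdd n b ↔ a = b := by
  simp [Fin.ext_iff]

lemma addNat_ne_castAdd (p q : Fin n) : p.addNat n ≠ Fin.castAdd n q := by
  intro h
  have h2 := congrArg Fin.val h
  have hq := q.isLt
  simp at h2
  omega

lemma fin_cases (k : Fin (n + n)) :
    (∃ i : Fin n, k = Fin.castAdd n i) ∨ (∃ i : Fin n, k = Fin.natAdd n i) := by
  rcases lt_or_ge (k : ℕ) n with h | h
  · exact Or.inl ⟨⟨(k : ℕ), h⟩, by simp [Fin.ext_iff]⟩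
  · refine Or.inr ⟨⟨(k : ℕ) - n, by omega⟩, ?_⟩
    have := k.isLt
    simp only [Fin.ext_iff, Fin.natAdd]
    omega

/-- exponent vector of `x_p x_{n+q}` -/
def u1 (p q : Fin n) : Fin (n + n) →₀ ℕ :=
  Finsupp.single (Fin.castAdd n p) 1 + Finsupp.single (Fin.natAdd n q) 1

lemma edgeBinomial_eq (p q : Fin n) :
    edgeBinomial K n p q = monomial (u1 p q) (1 : K) - monomial (u1 q p) 1 := by
  simp [edgeBinomial, u1, X, monomial_mul]

lemma degB_u1 (p q : Fin n) :
    degB n (u1 p q) = (1, fun i => (if i = p then 1 else 0) + (if i = q then 1 else 0)) := by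
  unfold degB u1
  refine Prod.ext ?_ ?_
  · simp only [Finsupp.add_apply, Finsupp.single_apply, Fin.castAdd_inj]
    have hq : ∀ i : Fin n, ¬ (Fin.natAdd n q = Fin.castAdd n i) := fun i => natAdd_ne_castAdd q i
    simp only [hq, if_false, add_zero]
    simp [Finset.sum_ite_eq]
  · funext i
    simp only [Finsupp.add_apply, Finsupp.single_apply, Fin.castAdd_inj, natAdd_inj]
    rw [if_neg (natAdd_ne_castAdd q i), if_neg (castAdd_ne_natAdd p i)]
    simp [eq_comm]

lemma u1_ne {p q : Fin n} (h : p ≠ q) : u1 p q ≠ u1 q p := by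
  intro he
  have h2 := DFunLike.congr_fun he (Fin.castAdd n p)
  simp [u1, Finsupp.single_apply, natAdd_ne_castAdd, addNat_ne_castAdd, Fin.castAdd_inj,
    h.symm] at h2

lemma edgeBinomial_ne_zero (p q : Fin n) (h : p ≠ q) : edgeBinomial K n p q ≠ 0 := by
  rw [edgeBinomial_eq]
  intro h0
  have h2 := congrArg (coeff (u1 p q)) h0
  simp [coeff_monomial, Ne.symm (u1_ne h)] at h2

lemma isBHomogeneous_edgeBinomial (p q : Fin n) :
    IsBHomogeneous (edgeBinomial K n p q) := by
  have hd : degB n (u1 p q) = degB n (u1 q p) := by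
    rw [degB_u1, degB_u1]
    exact Prod.ext rfl (funext fun i => add_comm _ _)
  have hsub : (edgeBinomial K n p q).support ⊆ {u1 p q, u1 q p} := by
    rw [edgeBinomial_eq]
    refine (support_sub _ _ _).trans ?_
    rw [support_monomial, support_monomial]
    simp only [one_ne_zero, if_false]
    intro x hx
    simp only [Finset.mem_union, Finset.mem_singleton] at hx
    simp only [Finset.mem_insert, Finset.mem_singleton]
    exact hx
  intro u hu v hv
  have hu2 := hsub hu
  have hv2 := hsub hv
  simp only [Finset.mem_insert, Finset.mem_singleton] at hu2 hv2
  rcases hu2 with rfl | rfl <;> rcases hv2 with rfl | rfl <;> simp [hd]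

lemma mem_ker_eval_one (G : SimpleGraph (Fin n)) {f : MvPolynomial (Fin (n + n)) K}
    (hf : f ∈ binomialEdgeIdeal K G) : eval (fun _ => (1 : K)) f = 0 := by
  have h : binomialEdgeIdeal K G ≤ RingHom.ker (eval (fun _ => (1 : K))) := by
    rw [binomialEdgeIdeal, Ideal.span_le]
    rintro g ⟨p, q, -, -, rfl⟩
    simp [RingHom.mem_ker, edgeBinomial]
  exact h hf

lemma eq_zero_of_confined (G : SimpleGraph (Fin n)) {F : MvPolynomial (Fin (n + n)) K}
    (hFJ : F ∈ binomialEdgeIdeal K G) (hFB : IsBHomogeneous F) (r : Fin n)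
    (hs : ∀ u ∈ F.support, ∀ k, k ≠ Fin.castAdd n r → k ≠ Fin.natAdd n r → u k = 0) :
    F = 0 := by
  by_contra hF
  obtain ⟨u, hu⟩ := support_nonempty.mpr hF
  have hsum : ∀ w ∈ F.support, ∑ i : Fin n, w (Fin.castAdd n i) = w (Fin.castAdd n r) := by
    intro w hw
    refine Finset.sum_eq_single r (fun i _ hir => hs w hw _
      (fun h => hir (Fin.castAdd_inj.mp h)) (castAdd_ne_natAdd i r))
      (fun h => absurd (Finset.mem_univ r) h)
  have key : ∀ v ∈ F.support, v = u := by
    intro v hv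
    have hd := hFB v hv u hu
    have hfst := congrArg Prod.fst hd
    have hsnd := congrArg (fun x => x.2 r) hd
    simp only [degB] at hfst hsnd
    rw [hsum v hv, hsum u hu] at hfst
    have hnr : v (Fin.natAdd n r) = u (Fin.natAdd n r) := by omega
    ext k
    rcases fin_cases k with ⟨i, rfl⟩ | ⟨i, rfl⟩
    · by_cases hir : i = r
      · subst hir; exact hfst
      · rw [hs v hv _ (fun h => hir (Fin.castAdd_inj.mp h)) (castAdd_ne_natAdd i r),
          hs u hu _ (fun h => hir (Fin.castAdd_inj.mp h)) (castAdd_ne_natAdd i r)]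
    · by_cases hir : i = r
      · subst hir; exact hnr
      · rw [hs v hv _ (natAdd_ne_castAdd i r) (fun h => hir (natAdd_inj.mp h)),
          hs u hu _ (natAdd_ne_castAdd i r) (fun h => hir (natAdd_inj.mp h))]
  have hsupp : F.support = {u} := Finset.eq_singleton_iff_unique_mem.mpr ⟨hu, key⟩
  have he := mem_ker_eval_one G hFJ
  rw [eval_eq, hsupp, Finset.sum_singleton] at he
  simp at he
  exact mem_support_iff.mp hu he

/-- the projection killing all variables outside `S` -/
def proj (S : Set (Fin (n + n))) :
    MvPolynomial (Fin (n + n)) K →ₐ[K] MvPolynomial (Fin (n + n)) K :=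
  aeval (fun k => if k ∈ S then X k else 0)

lemma proj_eq_zero (S : Set (Fin (n + n))) {F : MvPolynomial (Fin (n + n)) K}
    (h : ∀ u ∈ F.support, ∃ k, k ∉ S ∧ u k ≠ 0) : proj S F = 0 := by
  rw [proj, aeval_def, eval₂_eq]
  refine Finset.sum_eq_zero fun d hd => ?_
  obtain ⟨k, hk1, hk2⟩ := h d hd
  have hz : ∏ i ∈ d.support, (if i ∈ S then (X i : MvPolynomial (Fin (n + n)) K) else 0) ^ d i
      = 0 := by
    apply Finset.prod_eq_zero (Finsupp.mem_support_iff.mpr hk2)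
    simp [hk1, zero_pow hk2]
  rw [hz, mul_zero]

lemma exists_good_mono {F : MvPolynomial (Fin (n + n)) K} {S : Set (Fin (n + n))}
    (h : proj S F ≠ 0) : ∃ u ∈ F.support, ∀ k, k ∉ S → u k = 0 := by
  by_contra hc
  push_neg at hc
  refine h (proj_eq_zero S fun u hu => ?_)
  obtain ⟨k, hk1, hk2⟩ := hc u hu
  exact ⟨k, hk1, hk2⟩

/-- the set of the four variables attached to the edge `{p,q}` -/
def Se (p q : Fin n) : Set (Fin (n + n)) :=
  {Fin.castAdd n p, Fin.castAdd n q, Fin.natAdd n p, Fin.natAdd n q}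

lemma mem_Se_iff {p q : Fin n} {k : Fin (n + n)} :
    k ∈ Se p q ↔ ∃ v, (v = p ∨ v = q) ∧ (k = Fin.castAdd n v ∨ k = Fin.natAdd n v) := by
  simp only [Se, Set.mem_insert_iff, Set.mem_singleton_iff]
  constructor
  · rintro (rfl | rfl | rfl | rfl)
    exacts [⟨p, Or.inl rfl, Or.inl rfl⟩, ⟨q, Or.inr rfl, Or.inl rfl⟩,
      ⟨p, Or.inl rfl, Or.inr rfl⟩, ⟨q, Or.inr rfl, Or.inr rfl⟩]
  · rintro ⟨v, (rfl | rfl), (rfl | rfl)⟩ <;> tauto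

lemma proj_edgeBinomial (S : Set (Fin (n + n))) (p q : Fin n)
    (h1 : Fin.castAdd n p ∈ S) (h2 : Fin.castAdd n q ∈ S)
    (h3 : Fin.natAdd n p ∈ S) (h4 : Fin.natAdd n q ∈ S) :
    proj S (edgeBinomial K n p q) = edgeBinomial K n p q := by
  rw [proj, edgeBinomial]
  simp only [map_sub, map_mul, aeval_X]
  rw [if_pos h1, if_pos h2, if_pos h3, if_pos h4]

lemma confined_of_proj_ne_zero {F : MvPolynomial (Fin (n + n)) K}
    (hFB : IsBHomogeneous F) (p q : Fin n) (h : proj (Se p q) F ≠ 0) :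
    ∀ u ∈ F.support, ∀ k, k ∉ Se p q → u k = 0 := by
  obtain ⟨u0, hu0, hu0p⟩ := exists_good_mono h
  have main : ∀ u ∈ F.support, ∀ j : Fin n, j ≠ p → j ≠ q →
      u (Fin.castAdd n j) = 0 ∧ u (Fin.natAdd n j) = 0 := by
    intro u hu j hjp hjq
    have hcj : Fin.castAdd n j ∉ Se p q := by
      rw [mem_Se_iff]
      rintro ⟨v, hv, (hk | hk)⟩
      · rw [Fin.castAdd_inj] at hk
        subst hk; tauto
      · exact castAdd_ne_natAdd j v hk
    have hnj : Fin.natAdd n j ∉ Se p q := by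
      rw [mem_Se_iff]
      rintro ⟨v, hv, (hk | hk)⟩
      · exact natAdd_ne_castAdd j v hk
      · rw [natAdd_inj] at hk
        subst hk; tauto
    have hd := hFB u hu u0 hu0
    have hsnd := congrArg (fun x => x.2 j) hd
    simp only [degB] at hsnd
    rw [hu0p _ hcj, hu0p _ hnj] at hsnd
    omega
  intro u hu k hk
  rcases fin_cases k with ⟨j, rfl⟩ | ⟨j, rfl⟩
  · have hjp : j ≠ p := fun e => hk (by rw [mem_Se_iff]; exact ⟨p, Or.inl rfl, Or.inl (by rw [e])⟩)
    have hjq : j ≠ q := fun e => hk (by rw [mem_Se_iff]; exact ⟨q, Or.inr rfl, Or.inl (by rw [e])⟩)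
    exact (main u hu j hjp hjq).1
  · have hjp : j ≠ p := fun e => hk (by rw [mem_Se_iff]; exact ⟨p, Or.inl rfl, Or.inr (by rw [e])⟩)
    have hjq : j ≠ q := fun e => hk (by rw [mem_Se_iff]; exact ⟨q, Or.inr rfl, Or.inr (by rw [e])⟩)
    exact (main u hu j hjp hjq).2

lemma hrepr (G : SimpleGraph (Fin n)) :
    ∀ e ∈ G.edgeSet, ∃ p q : Fin n, p < q ∧ G.Adj p q ∧ e = s(p, q) := by
  intro e he
  induction e with
  | _ a b =>
    rw [SimpleGraph.mem_edgeSet] at he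
    rcases lt_or_gt_of_ne (G.ne_of_adj he) with h | h
    · exact ⟨a, b, h, he, rfl⟩
    · exact ⟨b, a, h, he.symm, Sym2.eq_swap⟩

lemma card_le (G : SimpleGraph (Fin n)) [DecidableRel G.Adj] {s : ℕ}
    (F : Fin s → MvPolynomial (Fin (n + n)) K)
    (hmem : ∀ i, F i ∈ binomialEdgeIdeal K G ∧ IsBHomogeneous (F i))
    (hrad : (Ideal.span (Set.range F)).radical = (binomialEdgeIdeal K G).radical) :
    G.edgeFinset.card ≤ s := by
  -- detection
  have hdet : ∀ p q : Fin n, p < q → G.Adj p q → ∃ i, proj (Se p q) (F i) ≠ 0 := by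
    intro p q hpq hadj
    by_contra hc
    push_neg at hc
    have heb : edgeBinomial K n p q ∈ (Ideal.span (Set.range F)).radical := by
      rw [hrad]
      exact Ideal.le_radical (Ideal.subset_span ⟨p, q, hpq, hadj, rfl⟩)
    obtain ⟨t, ht⟩ := Ideal.mem_radical_iff.mp heb
    have hfix : (proj (Se p q)) ((edgeBinomial K n p q) ^ t) = (edgeBinomial K n p q) ^ t := by
      rw [map_pow, proj_edgeBinomial] <;> simp [Se]
    have hmapped : (edgeBinomial K n p q) ^ t ∈
        Ideal.map (proj (K := K) (Se p q)).toRingHom (Ideal.span (Set.range F)) := by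
      rw [← hfix]
      exact Ideal.mem_map_of_mem _ ht
    rw [Ideal.map_span] at hmapped
    have hbot : Ideal.span ((proj (K := K) (Se p q)).toRingHom '' Set.range F) ≤ ⊥ := by
      rw [Ideal.span_le]
      rintro x ⟨y, ⟨i, rfl⟩, rfl⟩
      simpa using hc i
    have h0 : (edgeBinomial K n p q) ^ t = 0 := by
      simpa using hbot hmapped
    rw [pow_eq_zero_iff'] at h0
    exact edgeBinomial_ne_zero p q (ne_of_lt hpq) h0.1
  -- choice of data for each edge
  have key : ∀ e : {e // e ∈ G.edgeFinset}, ∃ z : (Fin n × Fin n) × Fin s,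
      z.1.1 < z.1.2 ∧ G.Adj z.1.1 z.1.2 ∧ (e : Sym2 (Fin n)) = s(z.1.1, z.1.2) ∧
      F z.2 ≠ 0 ∧ ∀ u ∈ (F z.2).support, ∀ k, k ∉ Se z.1.1 z.1.2 → u k = 0 := by
    rintro ⟨e, he⟩
    rw [SimpleGraph.mem_edgeFinset] at he
    obtain ⟨p, q, hpq, hadj, rfl⟩ := hrepr G e he
    obtain ⟨i, hi⟩ := hdet p q hpq hadj
    refine ⟨⟨⟨p, q⟩, i⟩, hpq, hadj, rfl, ?_, confined_of_proj_ne_zero (hmem i).2 p q hi⟩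
    intro h0
    exact hi (by rw [h0, map_zero])
  choose z hlt hadjz heqz hne0 hconf using key
  have hinj : Function.Injective (fun e => (z e).2) := by
    intro e e' hee
    by_contra hne
    have h1 := hlt e
    have h2 := hadjz e
    have h3 := heqz e
    have h4 := hne0 e
    have h5 := hconf e
    have h1' := hlt e'
    have h3' := heqz e'
    have h5' := hconf e'
    simp only at hee
    rcases he1 : z e with ⟨⟨p, q⟩, i⟩
    rcases he2 : z e' with ⟨⟨p', q'⟩, i'⟩
    rw [he1] at h1 h2 h3 h4 h5 hee
    rw [he2] at h1' h3' h5' hee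
    simp only at h1 h2 h3 h4 h5 h1' h3' h5' hee
    subst hee
    have hsym : s(p, q) ≠ s(p', q') := by
      rw [← h3, ← h3']
      exact fun hv => hne (Subtype.ext hv)
    have hr : ∃ r : Fin n, ∀ v : Fin n, (v = p ∨ v = q) → (v = p' ∨ v = q') → v = r := by
      have l1 := h1
      have l2 := h1'
      rw [Fin.lt_def] at l1 l2
      by_cases hcase : p = p' ∨ p = q'
      · refine ⟨p, ?_⟩
        rintro v (rfl | rfl) hv
        · rfl
        · exfalso
          rcases hcase with h | h <;> rcases hv with h' | h'
          · have e1 := congrArg Fin.val h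
            have e2 := congrArg Fin.val h'
            omega
          · exact hsym (by rw [h, h'])
          · have e1 := congrArg Fin.val h
            have e2 := congrArg Fin.val h'
            omega
          · have e1 := congrArg Fin.val h
            have e2 := congrArg Fin.val h'
            omega
      · refine ⟨q, ?_⟩
        rintro v (rfl | rfl) hv
        · exact absurd hv hcase
        · rfl
    obtain ⟨r, hr⟩ := hr
    have hzero : F i = 0 := by
      refine eq_zero_of_confined G (hmem i).1 (hmem i).2 r ?_
      intro u hu k hkc hkn
      by_cases hk1 : k ∈ Se p q
      · by_cases hk2 : k ∈ Se p' q'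
        · exfalso
          obtain ⟨v, hv, hkv⟩ := mem_Se_iff.mp hk1
          obtain ⟨v', hv', hkv'⟩ := mem_Se_iff.mp hk2
          have hvv : v = v' := by
            rcases hkv with rfl | rfl <;> rcases hkv' with hh | hh
            · exact Fin.castAdd_inj.mp hh
            · exact absurd hh (castAdd_ne_natAdd v v')
            · exact absurd hh (natAdd_ne_castAdd v v')
            · exact natAdd_inj.mp hh
          have hvr : v = r := hr v hv (hvv ▸ hv')
          subst hvr
          rcases hkv with rfl | rfl
          · exact hkc rfl
          · exact hkn rfl
        · exact h5' u hu k hk2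
      · exact h5 u hu k hk1
    exact h4 hzero
  calc G.edgeFinset.card = Fintype.card {e // e ∈ G.edgeFinset} := (Fintype.card_coe _).symm
    _ ≤ Fintype.card (Fin s) := Fintype.card_le_of_injective _ hinj
    _ = s := Fintype.card_fin s

/-- the function assigning to an edge its binomial -/
def edgeFun (K : Type*) [Field K] {n : ℕ} : Sym2 (Fin n) → MvPolynomial (Fin (n + n)) K :=
  Sym2.lift ⟨fun a b => if a < b then edgeBinomial K n a b else edgeBinomial K n b a, by
    intro a b
    dsimp only
    rcases lt_trichotomy a b with h | h | h
    · rw [if_pos h, if_neg (asymm h)]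
    · subst h; rfl
    · rw [if_neg (asymm h), if_pos h]⟩

lemma edgeFun_mk {p q : Fin n} (h : p < q) : edgeFun K s(p, q) = edgeBinomial K n p q := by
  rw [edgeFun, Sym2.lift_mk]
  dsimp only
  rw [if_pos h]

lemma upper (G : SimpleGraph (Fin n)) [DecidableRel G.Adj] :
    ∃ F : Fin G.edgeFinset.card → MvPolynomial (Fin (n + n)) K,
      (∀ i, F i ∈ binomialEdgeIdeal K G ∧ IsBHomogeneous (F i)) ∧
      (Ideal.span (Set.range F)).radical = (binomialEdgeIdeal K G).radical := by
  have hrange : Set.range (fun i : Fin G.edgeFinset.card =>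
      edgeFun K ((G.edgeFinset.equivFin.symm i) : Sym2 (Fin n))) =
      {f | ∃ p q : Fin n, p < q ∧ G.Adj p q ∧ f = edgeBinomial K n p q} := by
    ext f
    constructor
    · rintro ⟨i, rfl⟩
      dsimp only
      have he := (G.edgeFinset.equivFin.symm i).2
      rw [SimpleGraph.mem_edgeFinset] at he
      obtain ⟨p, q, hpq, hadj, hee⟩ := hrepr G _ he
      exact ⟨p, q, hpq, hadj, by rw [hee, edgeFun_mk hpq]⟩
    · rintro ⟨p, q, hpq, hadj, rfl⟩
      have he : s(p, q) ∈ G.edgeFinset := by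
        rw [SimpleGraph.mem_edgeFinset, SimpleGraph.mem_edgeSet]; exact hadj
      refine ⟨G.edgeFinset.equivFin ⟨s(p, q), he⟩, ?_⟩
      simp only [Equiv.symm_apply_apply]
      exact edgeFun_mk hpq
  refine ⟨fun i => edgeFun K ((G.edgeFinset.equivFin.symm i) : Sym2 (Fin n)), fun i => ?_, ?_⟩
  · have hmemi : edgeFun K ((G.edgeFinset.equivFin.symm i) : Sym2 (Fin n)) ∈
        {f | ∃ p q : Fin n, p < q ∧ G.Adj p q ∧ f = edgeBinomial K n p q} := by
      rw [← hrange]; exact ⟨i, rfl⟩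
    obtain ⟨p, q, hpq, hadj, hf⟩ := hmemi
    constructor
    · exact Ideal.subset_span ⟨p, q, hpq, hadj, hf⟩
    · dsimp only
      rw [hf]
      exact isBHomogeneous_edgeBinomial p q
  · rw [binomialEdgeIdeal, ← hrange]

end BEI

theorem stmt_7 (K : Type*) [Field K] (n : ℕ) (hn : 0 < n)
    (G : SimpleGraph (Fin n)) [DecidableRel G.Adj] (hconn : G.Connected)
    (m : ℕ) (hm : G.edgeFinset.card = m) :
    araB (binomialEdgeIdeal K G) = m := by
  classical
  subst hm
  obtain ⟨F0, hF01, hF02⟩ := BEI.upper (K := K) G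
  apply le_antisymm
  · exact Nat.sInf_le ⟨F0, hF01, hF02⟩
  · refine le_csInf ⟨_, F0, hF01, hF02⟩ ?_
    rintro s ⟨F, h1, h2⟩
    exact BEI.card_le G F h1 h2
end
end

section
/- Let G be a connected finite simple graph on the vertex set {1,…,n} with m edges. Suppose G contains two vertex-disjoint triangles C_1 and C_2 (i.e., two disjoint sets of three pairwise adjacent vertices) together with two distinct edges of G each of which joins a vertex of C_1 to a vertex of C_2. Then ara(J_G) ≤ m − 2. -/
open MvPolynomial

noncomputable section

/-! ### Auxiliary machinery -/

namespace Stmt13Aux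

variable (K : Type*) [Field K] {n : ℕ}

/-- Edge binomial attached to an unordered pair (sorted representative). -/
def fE (s : Sym2 (Fin n)) : MvPolynomial (Fin (n + n)) K :=
  edgeBinomial K n s.inf s.sup

variable {K}

lemma eb_swap (p q : Fin n) :
    edgeBinomial K n q p = - edgeBinomial K n p q := by
  simp only [edgeBinomial]; ring

lemma fE_pm (u v : Fin n) :
    fE K s(u, v) = edgeBinomial K n u v ∨ fE K s(u, v) = - edgeBinomial K n u v := by
  rcases le_total u v with h | h
  · left
    simp [fE, inf_eq_left.mpr h, sup_eq_right.mpr h]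
  · right
    have : fE K s(u, v) = edgeBinomial K n v u := by
      simp [fE, inf_eq_right.mpr h, sup_eq_left.mpr h]
    rw [this, eb_swap]

lemma fE_of_lt {u v : Fin n} (h : u < v) : fE K s(u, v) = edgeBinomial K n u v := by
  simp [fE, inf_eq_left.mpr h.le, sup_eq_right.mpr h.le]

lemma eb_mem_span_fE (u v : Fin n) :
    edgeBinomial K n u v ∈ Ideal.span {fE K s(u, v)} := by
  rcases fE_pm (K := K) u v with h | h
  · rw [← h]; exact Ideal.subset_span rfl
  · have : edgeBinomial K n u v = - fE K s(u, v) := by rw [h, neg_neg]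
    rw [this]
    exact neg_mem (Ideal.subset_span rfl)

lemma plucker (p q x y : Fin n) :
    edgeBinomial K n p q * edgeBinomial K n x y =
      edgeBinomial K n p x * edgeBinomial K n q y
        - edgeBinomial K n p y * edgeBinomial K n q x := by
  simp only [edgeBinomial]; ring

/-- The key Plücker-type membership: the product of the binomials of `s(u,v)` and `s(x,y)` lies
in the ideal generated by the binomials of `s(v,x)` and `s(v,y)`. -/
lemma key (u v x y : Fin n) :
    fE K s(u, v) * fE K s(x, y) ∈ Ideal.span {fE K s(v, x), fE K s(v, y)} := by
  have h1 : edgeBinomial K n v x ∈ Ideal.span {fE K s(v, x), fE K s(v, y)} :=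
    Ideal.span_mono (by simp) (eb_mem_span_fE v x)
  have h2 : edgeBinomial K n v y ∈ Ideal.span {fE K s(v, x), fE K s(v, y)} :=
    Ideal.span_mono (by simp) (eb_mem_span_fE v y)
  have hp : edgeBinomial K n u v * edgeBinomial K n x y
      ∈ Ideal.span {fE K s(v, x), fE K s(v, y)} := by
    rw [plucker]
    exact sub_mem (Ideal.mul_mem_left _ _ h2) (Ideal.mul_mem_left _ _ h1)
  rcases fE_pm (K := K) u v with ha | ha <;> rcases fE_pm (K := K) x y with hb | hb <;>
    rw [ha, hb]
  · exact hp
  · rw [mul_neg]; exact neg_mem hp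
  · rw [neg_mul]; exact neg_mem hp
  · rw [neg_mul, mul_neg, neg_neg]; exact hp

lemma mem_radical_pair {R : Type*} [CommRing R] (I : Ideal R) {a b : R}
    (hab : a + b ∈ I) (hm : a * b ∈ I) : a ∈ I.radical := by
  refine Ideal.mem_radical_iff.mpr ⟨2, ?_⟩
  have h : a ^ 2 = a * (a + b) - a * b := by ring
  rw [h]
  exact sub_mem (I.mul_mem_left a hab) hm

lemma fE_mem_J {G : SimpleGraph (Fin n)} [DecidableRel G.Adj] {s : Sym2 (Fin n)}
    (hs : s ∈ G.edgeFinset) : fE K s ∈ binomialEdgeIdeal K G := by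
  induction s using Sym2.ind with
  | _ u v =>
    rw [SimpleGraph.mem_edgeFinset, SimpleGraph.mem_edgeSet] at hs
    rcases lt_or_gt_of_ne hs.ne with h | h
    · rw [fE_of_lt h]
      exact Ideal.subset_span ⟨u, v, h, hs, rfl⟩
    · have : fE K s(u, v) = edgeBinomial K n v u := by
        simp [fE, inf_eq_right.mpr h.le, sup_eq_left.mpr h.le]
      rw [this]
      exact Ideal.subset_span ⟨v, u, h, hs.symm, rfl⟩

lemma ara_le_card {K : Type*} [Field K] {m : ℕ} (I : Ideal (MvPolynomial (Fin m) K))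
    (T : Finset (MvPolynomial (Fin m) K)) (hT : ∀ f ∈ T, f ∈ I)
    (hrad : (Ideal.span (T : Set (MvPolynomial (Fin m) K))).radical = I.radical) :
    ara I ≤ T.card := by
  apply Nat.sInf_le
  refine ⟨fun i => (T.equivFin.symm i : MvPolynomial (Fin m) K), fun i => hT _ (T.equivFin.symm i).2, ?_⟩
  have hr : Set.range (fun i => ((T.equivFin.symm i : T) : MvPolynomial (Fin m) K))
      = (T : Set (MvPolynomial (Fin m) K)) := by
    ext z
    constructor
    · rintro ⟨i, rfl⟩
      exact (T.equivFin.symm i).2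
    · intro hz
      exact ⟨T.equivFin ⟨z, hz⟩, by simp⟩
  rw [hr, hrad]

end Stmt13Aux

open Stmt13Aux

theorem stmt_13 (K : Type*) [Field K] (n : ℕ) (hn : 0 < n)
    (G : SimpleGraph (Fin n)) [DecidableRel G.Adj] (hconn : G.Connected)
    (m : ℕ) (hm : G.edgeFinset.card = m)
    (a b c d e f : Fin n)
    -- the two triangles
    (hC1 : G.Adj a b ∧ G.Adj b c ∧ G.Adj a c)
    (hC2 : G.Adj d e ∧ G.Adj e f ∧ G.Adj d f)
    -- the triangles are vertex-disjoint
    (hdisj : ({a, b, c} : Set (Fin n)) ∩ {d, e, f} = ∅)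
    -- two distinct bridges between the triangles
    (p₁ q₁ p₂ q₂ : Fin n)
    (hp₁ : p₁ ∈ ({a, b, c} : Set (Fin n))) (hq₁ : q₁ ∈ ({d, e, f} : Set (Fin n)))
    (hp₂ : p₂ ∈ ({a, b, c} : Set (Fin n))) (hq₂ : q₂ ∈ ({d, e, f} : Set (Fin n)))
    (hb₁ : G.Adj p₁ q₁) (hb₂ : G.Adj p₂ q₂)
    (hne : s(p₁, q₁) ≠ s(p₂, q₂)) :
    ara (binomialEdgeIdeal K G) ≤ m - 2 := by
  classical
  obtain ⟨hab, hbc, hac⟩ := hC1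
  obtain ⟨hde, hef, hdf⟩ := hC2
  set C1s : Set (Fin n) := {a, b, c} with hC1s
  set C2s : Set (Fin n) := {d, e, f} with hC2s
  have hD : ∀ z : Fin n, z ∈ C1s → z ∈ C2s → False := by
    intro z h1 h2
    have : z ∈ C1s ∩ C2s := ⟨h1, h2⟩
    rw [hdisj] at this
    exact this
  -- opposite edge of q₁ in the second triangle
  have tri2 : ∃ x y : Fin n, x ∈ C2s ∧ y ∈ C2s ∧ G.Adj q₁ x ∧ G.Adj q₁ y ∧ G.Adj x y := by
    simp only [hC2s, Set.mem_insert_iff, Set.mem_singleton_iff] at hq₁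
    rcases hq₁ with h | h | h <;> subst h
    · exact ⟨e, f, by simp [hC2s], by simp [hC2s], hde, hdf, hef⟩
    · exact ⟨d, f, by simp [hC2s], by simp [hC2s], hde.symm, hef, hdf⟩
    · exact ⟨d, e, by simp [hC2s], by simp [hC2s], hdf.symm, hef.symm, hde⟩
  obtain ⟨x₁, y₁, hx₁, hy₁, hq₁x, hq₁y, hx₁y₁⟩ := tri2
  -- opposite edge of p₂ in the first triangle
  have tri1 : ∃ x y : Fin n, x ∈ C1s ∧ y ∈ C1s ∧ G.Adj p₂ x ∧ G.Adj p₂ y ∧ G.Adj x y := by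
    simp only [hC1s, Set.mem_insert_iff, Set.mem_singleton_iff] at hp₂
    rcases hp₂ with h | h | h <;> subst h
    · exact ⟨b, c, by simp [hC1s], by simp [hC1s], hab, hac, hbc⟩
    · exact ⟨a, c, by simp [hC1s], by simp [hC1s], hab.symm, hbc, hac⟩
    · exact ⟨a, b, by simp [hC1s], by simp [hC1s], hac.symm, hbc.symm, hab⟩
  obtain ⟨x₂, y₂, hx₂, hy₂, hp₂x, hp₂y, hx₂y₂⟩ := tri1
  -- cross-side inequalities between unordered pairs
  have cross : ∀ u v x y : Fin n, u ∈ C1s → x ∈ C2s → y ∈ C2s → s(u, v) ≠ s(x, y) := by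
    intro u v x y hu hx hy h
    rw [Sym2.eq_iff] at h
    rcases h with ⟨h1, _⟩ | ⟨h1, _⟩
    · exact hD u hu (h1 ▸ hx)
    · exact hD u hu (h1 ▸ hy)
  have cross2 : ∀ u v x y : Fin n, v ∈ C2s → x ∈ C1s → y ∈ C1s → s(u, v) ≠ s(x, y) := by
    intro u v x y hv hx hy h
    rw [Sym2.eq_iff] at h
    rcases h with ⟨_, h2⟩ | ⟨_, h2⟩
    · exact hD v (h2 ▸ hy) hv
    · exact hD v (h2 ▸ hx) hv
  -- the four special edges
  set E1 : Sym2 (Fin n) := s(p₁, q₁) with hE1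
  set G1 : Sym2 (Fin n) := s(x₁, y₁) with hG1
  set E2 : Sym2 (Fin n) := s(p₂, q₂) with hG2e
  set G2 : Sym2 (Fin n) := s(x₂, y₂) with hG2
  have hE1mem : E1 ∈ G.edgeFinset := by simp [hE1, SimpleGraph.mem_edgeFinset, hb₁]
  have hG1mem : G1 ∈ G.edgeFinset := by simp [hG1, SimpleGraph.mem_edgeFinset, hx₁y₁]
  have hE2mem : E2 ∈ G.edgeFinset := by simp [hG2e, SimpleGraph.mem_edgeFinset, hb₂]
  have hG2mem : G2 ∈ G.edgeFinset := by simp [hG2, SimpleGraph.mem_edgeFinset, hx₂y₂]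
  have hE1G1 : E1 ≠ G1 := cross p₁ q₁ x₁ y₁ hp₁ hx₁ hy₁
  have hE1E2 : E1 ≠ E2 := hne
  have hE1G2 : E1 ≠ G2 := cross2 p₁ q₁ x₂ y₂ hq₁ hx₂ hy₂
  have hG1E2 : G1 ≠ E2 := (cross p₂ q₂ x₁ y₁ hp₂ hx₁ hy₁).symm
  have hG1G2 : G1 ≠ G2 := cross2 x₁ y₁ x₂ y₂ hy₁ hx₂ hy₂
  have hE2G2 : E2 ≠ G2 := cross2 p₂ q₂ x₂ y₂ hq₂ hx₂ hy₂
  set R : Finset (Sym2 (Fin n)) := {E1, G1, E2, G2} with hR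
  have hRsub : R ⊆ G.edgeFinset := by
    intro s hs
    simp only [hR, Finset.mem_insert, Finset.mem_singleton] at hs
    rcases hs with rfl | rfl | rfl | rfl
    exacts [hE1mem, hG1mem, hE2mem, hG2mem]
  have hR4 : R.card = 4 := by
    rw [hR]
    rw [Finset.card_insert_of_notMem (by simp [hE1G1, hE1E2, hE1G2]),
      Finset.card_insert_of_notMem (by simp [hG1E2, hG1G2]),
      Finset.card_insert_of_notMem (by simp [hE2G2]), Finset.card_singleton]
  have hm4 : 4 ≤ m := by
    rw [← hm, ← hR4]
    exact Finset.card_le_card hRsub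
  -- the generating set
  set F1 : MvPolynomial (Fin (n + n)) K := fE K E1 + fE K G1 with hF1
  set F2 : MvPolynomial (Fin (n + n)) K := fE K E2 + fE K G2 with hF2
  set T : Finset (MvPolynomial (Fin (n + n)) K) :=
    insert F1 (insert F2 ((G.edgeFinset \ R).image (fE K))) with hT
  -- T is contained in J
  set J : Ideal (MvPolynomial (Fin (n + n)) K) := binomialEdgeIdeal K G with hJ
  have hTJ : ∀ g ∈ T, g ∈ J := by
    intro g hg
    simp only [hT, Finset.mem_insert, Finset.mem_image, Finset.mem_sdiff] at hg
    rcases hg with rfl | rfl | ⟨s, ⟨hs, _⟩, rfl⟩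
    · exact add_mem (fE_mem_J hE1mem) (fE_mem_J hG1mem)
    · exact add_mem (fE_mem_J hE2mem) (fE_mem_J hG2mem)
    · exact fE_mem_J hs
  -- membership of the auxiliary inner-triangle edges
  have hmemT : ∀ s : Sym2 (Fin n), s ∈ G.edgeFinset → s ∉ R →
      fE K s ∈ Ideal.span (T : Set (MvPolynomial (Fin (n + n)) K)) := by
    intro s hs hsR
    apply Ideal.subset_span
    simp only [hT, Finset.coe_insert, Set.mem_insert_iff, Finset.coe_image, Set.mem_image,
      Finset.mem_coe, Finset.mem_sdiff]
    exact Or.inr (Or.inr ⟨s, ⟨hs, hsR⟩, rfl⟩)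
  -- the inner edges s(q₁,x₁), s(q₁,y₁) are in edgeFinset \ R
  have hq₁x₁R : s(q₁, x₁) ∉ R := by
    simp only [hR, Finset.mem_insert, Finset.mem_singleton]
    push_neg
    refine ⟨(cross p₁ q₁ q₁ x₁ hp₁ hq₁ hx₁).symm, ?_, (cross p₂ q₂ q₁ x₁ hp₂ hq₁ hx₁).symm,
      (cross x₂ y₂ q₁ x₁ hx₂ hq₁ hx₁).symm⟩
    intro h
    rw [Sym2.eq_iff] at h
    rcases h with ⟨h, -⟩ | ⟨h, -⟩
    exacts [hq₁x.ne h, hq₁y.ne h]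
  have hq₁y₁R : s(q₁, y₁) ∉ R := by
    simp only [hR, Finset.mem_insert, Finset.mem_singleton]
    push_neg
    refine ⟨(cross p₁ q₁ q₁ y₁ hp₁ hq₁ hy₁).symm, ?_, (cross p₂ q₂ q₁ y₁ hp₂ hq₁ hy₁).symm,
      (cross x₂ y₂ q₁ y₁ hx₂ hq₁ hy₁).symm⟩
    intro h
    rw [Sym2.eq_iff] at h
    rcases h with ⟨h, -⟩ | ⟨h, -⟩
    exacts [hq₁x.ne h, hq₁y.ne h]
  have hp₂x₂R : s(p₂, x₂) ∉ R := by
    simp only [hR, Finset.mem_insert, Finset.mem_singleton]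
    push_neg
    refine ⟨(cross2 p₁ q₁ p₂ x₂ hq₁ hp₂ hx₂).symm, (cross p₂ x₂ x₁ y₁ hp₂ hx₁ hy₁),
      (cross2 p₂ q₂ p₂ x₂ hq₂ hp₂ hx₂).symm, ?_⟩
    intro h
    rw [Sym2.eq_iff] at h
    rcases h with ⟨h, -⟩ | ⟨h, -⟩
    exacts [hp₂x.ne h, hp₂y.ne h]
  have hp₂y₂R : s(p₂, y₂) ∉ R := by
    simp only [hR, Finset.mem_insert, Finset.mem_singleton]
    push_neg
    refine ⟨(cross2 p₁ q₁ p₂ y₂ hq₁ hp₂ hy₂).symm, (cross p₂ y₂ x₁ y₁ hp₂ hx₁ hy₁),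
      (cross2 p₂ q₂ p₂ y₂ hq₂ hp₂ hy₂).symm, ?_⟩
    intro h
    rw [Sym2.eq_iff] at h
    rcases h with ⟨h, -⟩ | ⟨h, -⟩
    exacts [hp₂x.ne h, hp₂y.ne h]
  have hq₁x₁mem : s(q₁, x₁) ∈ G.edgeFinset := by
    simp [SimpleGraph.mem_edgeFinset, hq₁x]
  have hq₁y₁mem : s(q₁, y₁) ∈ G.edgeFinset := by
    simp [SimpleGraph.mem_edgeFinset, hq₁y]
  have hp₂x₂mem : s(p₂, x₂) ∈ G.edgeFinset := by
    simp [SimpleGraph.mem_edgeFinset, hp₂x]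
  have hp₂y₂mem : s(p₂, y₂) ∈ G.edgeFinset := by
    simp [SimpleGraph.mem_edgeFinset, hp₂y]
  -- products of the paired binomials lie in span T
  have hprod1 : fE K E1 * fE K G1 ∈ Ideal.span (T : Set (MvPolynomial (Fin (n + n)) K)) := by
    have h := key (K := K) p₁ q₁ x₁ y₁
    have hle : Ideal.span {fE K s(q₁, x₁), fE K s(q₁, y₁)}
        ≤ Ideal.span (T : Set (MvPolynomial (Fin (n + n)) K)) := by
      rw [Ideal.span_le]
      rintro g (rfl | rfl)
      · exact hmemT _ hq₁x₁mem hq₁x₁R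
      · exact hmemT _ hq₁y₁mem hq₁y₁R
    exact hle h
  have hprod2 : fE K E2 * fE K G2 ∈ Ideal.span (T : Set (MvPolynomial (Fin (n + n)) K)) := by
    have h := key (K := K) q₂ p₂ x₂ y₂
    have hsw : s(q₂, p₂) = E2 := Sym2.eq_swap
    rw [hsw] at h
    have hle : Ideal.span {fE K s(p₂, x₂), fE K s(p₂, y₂)}
        ≤ Ideal.span (T : Set (MvPolynomial (Fin (n + n)) K)) := by
      rw [Ideal.span_le]
      rintro g (rfl | rfl)
      · exact hmemT _ hp₂x₂mem hp₂x₂R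
      · exact hmemT _ hp₂y₂mem hp₂y₂R
    exact hle h
  have hF1T : F1 ∈ Ideal.span (T : Set (MvPolynomial (Fin (n + n)) K)) :=
    Ideal.subset_span (by simp [hT])
  have hF2T : F2 ∈ Ideal.span (T : Set (MvPolynomial (Fin (n + n)) K)) :=
    Ideal.subset_span (by simp [hT])
  -- every edge binomial is in the radical of span T
  have claim : ∀ s : Sym2 (Fin n), s ∈ G.edgeFinset →
      fE K s ∈ (Ideal.span (T : Set (MvPolynomial (Fin (n + n)) K))).radical := by
    intro s hs
    by_cases h1 : s = E1
    · subst h1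
      exact mem_radical_pair _ hF1T hprod1
    by_cases h2 : s = G1
    · subst h2
      refine mem_radical_pair _ (a := fE K G1) (b := fE K E1) ?_ ?_
      · rw [add_comm (fE K G1) (fE K E1)]; exact hF1T
      · rw [mul_comm (fE K G1) (fE K E1)]; exact hprod1
    by_cases h3 : s = E2
    · subst h3
      exact mem_radical_pair _ hF2T hprod2
    by_cases h4 : s = G2
    · subst h4
      refine mem_radical_pair _ (a := fE K G2) (b := fE K E2) ?_ ?_
      · rw [add_comm (fE K G2) (fE K E2)]; exact hF2T
      · rw [mul_comm (fE K G2) (fE K E2)]; exact hprod2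
    · refine Ideal.le_radical (hmemT s hs ?_)
      simp only [hR, Finset.mem_insert, Finset.mem_singleton]
      push_neg
      exact ⟨h1, h2, h3, h4⟩
  -- radical equality
  have hrad : (Ideal.span (T : Set (MvPolynomial (Fin (n + n)) K))).radical = J.radical := by
    apply le_antisymm
    · exact Ideal.radical_mono (Ideal.span_le.mpr fun g hg => hTJ g hg)
    · have hJle : J ≤ (Ideal.span (T : Set (MvPolynomial (Fin (n + n)) K))).radical := by
        rw [hJ, binomialEdgeIdeal, Ideal.span_le]
        rintro g ⟨p, q, hpq, hadj, rfl⟩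
        have : edgeBinomial K n p q = fE K s(p, q) := (fE_of_lt hpq).symm
        rw [this]
        exact claim s(p, q) (by simp [SimpleGraph.mem_edgeFinset, hadj])
      calc J.radical ≤ ((Ideal.span (T : Set (MvPolynomial (Fin (n + n)) K))).radical).radical :=
            Ideal.radical_mono hJle
        _ = (Ideal.span (T : Set (MvPolynomial (Fin (n + n)) K))).radical :=
            Ideal.radical_idem _
  -- cardinality bound
  have hcard : T.card ≤ m - 2 := by
    have h1 : T.card ≤ 2 + ((G.edgeFinset \ R).image (fE K)).card := by
      calc T.card ≤ (insert F2 ((G.edgeFinset \ R).image (fE K))).card + 1 :=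
            Finset.card_insert_le _ _
        _ ≤ (((G.edgeFinset \ R).image (fE K)).card + 1) + 1 := by
            exact Nat.add_le_add_right (Finset.card_insert_le _ _) 1
        _ = 2 + ((G.edgeFinset \ R).image (fE K)).card := by omega
    have h2 : ((G.edgeFinset \ R).image (fE K)).card ≤ (G.edgeFinset \ R).card :=
      Finset.card_image_le
    have h3 : (G.edgeFinset \ R).card = m - 4 := by
      rw [Finset.card_sdiff_of_subset hRsub, hR4, hm]
    omega
  exact le_trans (ara_le_card J T hTJ hrad) hcard

end
end
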